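/- arXiv:math/0406392 — 9 statements merged into one kernel-verified Lean document; each statement's English description precedes it below -/
import Mathlib

section
/- Let P be a probability measure on ℝ and define p(x) = P([x−1, x+1]). Then the set {x : p(−x) < 2·p(x)} has positive P-measure. -/
open MeasureTheory Set Filter Topology Metric
open scoped ENNReal

/-!
Suppose `2 p(x) ≤ p(-x)` for `P`-almost every `x`. Unit intervals `[a, a + 1]` of maximal mass
`ν > 0` exist, since `a ↦ P [a, a + 1]` is upper semicontinuous and `P` is tight. For such an `a`
and a typical `x ∈ [a, a + 1]` we get `2ν ≤ 2 p(x) ≤ p(-x) ≤ P [-x - 1, -x] + P [-x, -x + 1] ≤ 2ν`,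
so `-x - 1` and `-x` are again maximal left endpoints. Comparing with the largest maximal left
endpoint `t` and the smallest one `u` forces `u = -t - 1`, and then the whole mass of
`[t, t + 1]` sits at `t` and that of `[u, u + 1]` at `-t`. The inequality at these two atoms gives
`4 p(t) ≤ p(t)` with `0 < p(t) < ∞`.
-/

theorem upperSemicontinuous_measure_Icc_add (P : Measure ℝ) [IsFiniteMeasureOnCompacts P]
    (w : ℝ) : UpperSemicontinuous fun a ↦ P (Icc a (a + w)) := by
  intro a y hy
  have hthick : ∀ᶠ r in 𝓝 (0 : ℝ), P (cthickening r (Icc a (a + w))) < y :=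
    (tendsto_measure_cthickening_of_isCompact isCompact_Icc).eventually (gt_mem_nhds hy)
  have hdist : Tendsto (fun b ↦ |b - a|) (𝓝 a) (𝓝 0) := by
    simpa using ((continuous_sub_right a).abs.tendsto a)
  filter_upwards [hdist.eventually hthick] with b hb
  refine lt_of_le_of_lt (measure_mono fun x hx ↦ ?_) hb
  refine mem_cthickening_of_dist_le x (x - (b - a)) _ _ ⟨?_, ?_⟩ ?_
  · linarith [hx.1]
  · linarith [hx.2]
  · simp

theorem isCompact_setOf_le_measure_Icc_add (P : Measure ℝ) [IsFiniteMeasure P] (w : ℝ)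
    {c : ℝ≥0∞} (hc : c ≠ 0) : IsCompact {a | c ≤ P (Icc a (a + w))} := by
  obtain ⟨ε, hε, hεc⟩ := exists_between (pos_iff_ne_zero.2 hc)
  obtain ⟨K, hK, hKε⟩ := isTightMeasureSet_iff_exists_isCompact_measure_compl_le.1
    (isTightMeasureSet_singleton (μ := P)) ε hε
  obtain ⟨m, hm⟩ := hK.bddBelow
  obtain ⟨M, hM⟩ := hK.bddAbove
  refine (isCompact_Icc (a := m - w) (b := M)).of_isClosed_subset
    ((upperSemicontinuous_measure_Icc_add P w).isClosed_preimage c) (fun a ha ↦ ?_)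
  have hmeet : (Icc a (a + w) ∩ K).Nonempty := by
    by_contra hdisj
    have hsub : Icc a (a + w) ⊆ Kᶜ := fun x hx hxK ↦ hdisj ⟨x, hx, hxK⟩
    exact (ha.trans (measure_mono hsub)).not_gt ((hKε P rfl).trans_lt hεc)
  obtain ⟨x, hx, hxK⟩ := hmeet
  exact ⟨by linarith [hm hxK, hx.2], by linarith [hM hxK, hx.1]⟩

theorem exists_measure_Icc_add_one_ne_zero (P : Measure ℝ) [NeZero P] :
    ∃ a, P (Icc a (a + 1)) ≠ 0 := by
  by_contra! h
  have hcover : ⋃ n : ℤ, Icc (n : ℝ) (n + 1) = univ :=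
    eq_univ_of_forall fun x ↦ mem_iUnion.2 ⟨⌊x⌋, Int.floor_le x, (Int.lt_floor_add_one x).le⟩
  apply NeZero.ne P
  rw [← Measure.measure_univ_eq_zero, ← hcover]
  exact measure_iUnion_null fun n ↦ h n

theorem exists_isMaxOn_measure_Icc_add_one (P : Measure ℝ) [IsFiniteMeasure P] [NeZero P] :
    ∃ t, IsMaxOn (fun a ↦ P (Icc a (a + 1))) univ t := by
  obtain ⟨a₀, ha₀⟩ := exists_measure_Icc_add_one_ne_zero P
  set S := {a | P (Icc a₀ (a₀ + 1)) ≤ P (Icc a (a + 1))}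
  obtain ⟨t, ht, hmax⟩ := ((upperSemicontinuous_measure_Icc_add P 1).upperSemicontinuousOn S
    ).exists_isMaxOn (show S.Nonempty from ⟨a₀, le_refl (P (Icc a₀ (a₀ + 1)))⟩)
      (isCompact_setOf_le_measure_Icc_add P 1 ha₀)
  refine ⟨t, fun b _ ↦ ?_⟩
  by_cases hb : P (Icc a₀ (a₀ + 1)) ≤ P (Icc b (b + 1))
  · exact hmax hb
  · exact (not_le.1 hb).le.trans ht

theorem measure_Icc_sub_one_add_one_le (P : Measure ℝ) (x : ℝ) :
    P (Icc (x - 1) (x + 1)) ≤ P (Icc (x - 1) (x - 1 + 1)) + P (Icc x (x + 1)) := by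
  rw [sub_add_cancel, ← Icc_union_Icc_eq_Icc (by linarith) (by linarith)]
  exact measure_union_le _ _

theorem le_measure_Icc_neg_of_two_mul_le {P : Measure ℝ} [IsFiniteMeasure P] {a x : ℝ}
    (ha : IsMaxOn (fun b ↦ P (Icc b (b + 1))) univ a) (hx : x ∈ Icc a (a + 1))
    (h : 2 * P (Icc (x - 1) (x + 1)) ≤ P (Icc (-x - 1) (-x + 1))) :
    P (Icc a (a + 1)) ≤ P (Icc (-x - 1) (-x - 1 + 1)) ∧
      P (Icc a (a + 1)) ≤ P (Icc (-x) (-x + 1)) := by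
  set ν := P (Icc a (a + 1))
  have hνx : ν ≤ P (Icc (x - 1) (x + 1)) :=
    measure_mono (Icc_subset_Icc (by linarith [hx.2]) (by linarith [hx.1]))
  have hsum : ν + ν ≤ P (Icc (-x - 1) (-x - 1 + 1)) + P (Icc (-x) (-x + 1)) := calc
    ν + ν = 2 * ν := (two_mul ν).symm
    _ ≤ 2 * P (Icc (x - 1) (x + 1)) := by gcongr
    _ ≤ P (Icc (-x - 1) (-x + 1)) := h
    _ ≤ _ := measure_Icc_sub_one_add_one_le P (-x)
  have hν : ν ≠ ∞ := measure_ne_top P _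
  constructor
  · exact (ENNReal.add_le_add_iff_right hν).1 (hsum.trans (by gcongr; exact ha (mem_univ _)))
  · exact (ENNReal.add_le_add_iff_left hν).1 (hsum.trans (by gcongr; exact ha (mem_univ _)))

theorem ae_apply_of_measure_singleton_ne_zero {α : Type*} [MeasurableSpace α] {μ : Measure α}
    {q : α → Prop} (h : ∀ᵐ x ∂μ, q x) {z : α} (hz : μ {z} ≠ 0) : q z := by
  by_contra hq
  exact hz (measure_mono_null (singleton_subset_iff.2 hq) (ae_iff.1 h))

theorem exists_measure_singleton_ne_zero_of_ae {P : Measure ℝ} [IsFiniteMeasure P] [NeZero P]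
    (hE : ∀ᵐ x ∂P, 2 * P (Icc (x - 1) (x + 1)) ≤ P (Icc (-x - 1) (-x + 1))) :
    ∃ t, P {t} ≠ 0 ∧ P {-t} ≠ 0 := by
  obtain ⟨a₀, ha₀⟩ := exists_isMaxOn_measure_Icc_add_one P
  set ν := P (Icc a₀ (a₀ + 1))
  have hν : ν ≠ 0 := by
    obtain ⟨a, ha⟩ := exists_measure_Icc_add_one_ne_zero P
    exact ne_bot_of_le_ne_bot ha (ha₀ (mem_univ a))
  set B := {a | ν ≤ P (Icc a (a + 1))}
  have hB : IsCompact B := isCompact_setOf_le_measure_Icc_add P 1 hν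
  have hBne : B.Nonempty := ⟨a₀, le_refl ν⟩
  set t := sSup B
  set u := sInf B
  have hmaxOn : ∀ a ∈ B, IsMaxOn (fun b ↦ P (Icc b (b + 1))) univ a :=
    fun a ha ↦ isMaxOn_univ_iff.2 fun b ↦ (ha₀ (mem_univ b)).trans ha
  have hsqueeze : ∀ a ∈ B, ∀ᵐ x ∂P, x ∈ Icc a (a + 1) → -t ≤ x ∧ x ≤ -u - 1 := by
    intro a ha
    filter_upwards [hE] with x hx hxa
    obtain ⟨hleft, hright⟩ := le_measure_Icc_neg_of_two_mul_le (hmaxOn a ha) hxa hx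
    have h₁ : u ≤ -x - 1 := csInf_le hB.bddBelow (ha.trans hleft)
    have h₂ : -x ≤ t := le_csSup hB.bddAbove (ha.trans hright)
    constructor <;> linarith
  have hexists : ∀ a ∈ B, ∃ x ∈ Icc a (a + 1), -t ≤ x ∧ x ≤ -u - 1 := fun a ha ↦
    Measure.exists_mem_of_measure_ne_zero_of_ae (ne_bot_of_le_ne_bot hν ha)
      ((ae_restrict_iff' measurableSet_Icc).2 (hsqueeze a ha))
  have ht : t ∈ B := hB.sSup_mem hBne
  have hu : u ∈ B := hB.sInf_mem hBne
  obtain ⟨x, hx, -, hxu⟩ := hexists t ht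
  obtain ⟨y, hy, hyt, -⟩ := hexists u hu
  have hut : u = -t - 1 := by linarith [hx.1, hy.2]
  have hatom : ∀ a ∈ B, ∀ z, (∀ x ∈ Icc a (a + 1), -t ≤ x ∧ x ≤ -u - 1 → x = z) → P {z} ≠ 0 :=
    fun a ha z hz ↦ ne_bot_of_le_ne_bot (ne_bot_of_le_ne_bot hν ha)
      (measure_mono_ae ((hsqueeze a ha).mono fun x hx hxa ↦ hz x hxa (hx hxa)))
  refine ⟨t, hatom t ht t fun x hx hxb ↦ ?_, hatom u hu (-t) fun x hx hxb ↦ ?_⟩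
  · linarith [hx.1, hxb.2]
  · linarith [hx.2, hxb.1]

theorem not_ae_two_mul_measure_Icc_le (P : Measure ℝ) [IsFiniteMeasure P] [NeZero P] :
    ¬ ∀ᵐ x ∂P, 2 * P (Icc (x - 1) (x + 1)) ≤ P (Icc (-x - 1) (-x + 1)) := by
  intro hE
  obtain ⟨t, ht, hmt⟩ := exists_measure_singleton_ne_zero_of_ae hE
  have h₁ := ae_apply_of_measure_singleton_ne_zero hE ht
  have h₂ : 2 * P (Icc (-t - 1) (-t + 1)) ≤ P (Icc (t - 1) (t + 1)) := by
    simpa using ae_apply_of_measure_singleton_ne_zero hE hmt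
  have hpos : P (Icc (t - 1) (t + 1)) ≠ 0 :=
    ne_bot_of_le_ne_bot ht (measure_mono (singleton_subset_iff.2 ⟨by linarith, by linarith⟩))
  have hfour : (2 * 2) * P (Icc (t - 1) (t + 1)) ≤ 1 * P (Icc (t - 1) (t + 1)) := by
    rw [one_mul, mul_assoc]
    exact (mul_le_mul_right h₁ 2).trans h₂
  exact absurd ((ENNReal.mul_le_mul_iff_left hpos (measure_ne_top P _)).1 hfour) (by norm_num)

theorem stmt_1 (P : Measure ℝ) [IsProbabilityMeasure P]
    (p : ℝ → ENNReal) (hp : ∀ x, p x = P (Set.Icc (x - 1) (x + 1))) :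
    0 < P {x | p (-x) < 2 * p x} := by
  refine pos_iff_ne_zero.2 fun h ↦ not_ae_two_mul_measure_Icc_le P ?_
  rw [ae_iff]
  simpa [hp] using h
end

section
/- Let A be a symmetric real n×n matrix. Suppose that for every probability vector p (p ≥ 0 entrywise, entries summing to 1) there exists an index i with p_i > 0 and (Ap)_i > 0. Then qᵀAq > 0 for every probability vector q. -/
/-!
Let `m` minimise `x ⬝ᵥ A *ᵥ x` over the standard simplex. Moving mass `t` from a coordinate `i`
in the support of `m` to any coordinate `j` changes the quadratic form by
`2 t ((A m)_j - (A m)_i) + O(t²)`, so minimality forces `(A m)_i ≤ (A m)_j` for all `j`.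
Hence `m ⬝ᵥ A *ᵥ m = ∑ₖ mₖ (A m)ₖ ≥ (A m)_i`, and the hypothesis applied to `m` provides an `i`
in the support with `(A m)_i > 0`; the minimum, and so every value on the simplex, is positive.
-/

open Matrix Filter Topology

namespace Matrix

variable {ι R : Type*} [Fintype ι]

theorem IsSymm.dotProduct_mulVec_comm [CommSemiring R] {A : Matrix ι ι R} (hA : A.IsSymm)
    (x y : ι → R) : x ⬝ᵥ A *ᵥ y = y ⬝ᵥ A *ᵥ x := by
  rw [dotProduct_mulVec, ← mulVec_transpose, hA.eq, dotProduct_comm]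

theorem IsSymm.dotProduct_mulVec_add_smul [CommRing R] {A : Matrix ι ι R} (hA : A.IsSymm)
    (x v : ι → R) (t : R) :
    (x + t • v) ⬝ᵥ A *ᵥ (x + t • v) =
      x ⬝ᵥ A *ᵥ x + 2 * t * (v ⬝ᵥ A *ᵥ x) + t ^ 2 * (v ⬝ᵥ A *ᵥ v) := by
  simp only [mulVec_add, mulVec_smul, dotProduct_add, add_dotProduct, smul_dotProduct,
    dotProduct_smul, smul_eq_mul, hA.dotProduct_mulVec_comm x v]
  ring

end Matrix

section StdSimplex

variable {ι : Type*} [Fintype ι] [DecidableEq ι]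

theorem add_smul_single_sub_single_mem_stdSimplex {m : ι → ℝ} (hm : m ∈ stdSimplex ℝ ι)
    (i j : ι) {t : ℝ} (ht₀ : 0 ≤ t) (ht : t ≤ m i) :
    m + t • (Pi.single j 1 - Pi.single i 1) ∈ stdSimplex ℝ ι := by
  refine ⟨fun k => ?_, ?_⟩
  · simp only [Pi.add_apply, Pi.smul_apply, Pi.sub_apply, smul_eq_mul, Pi.single_apply]
    split_ifs <;> subst_vars <;> nlinarith [hm.1 k]
  · simp [Finset.sum_add_distrib, ← Finset.mul_sum, Finset.sum_sub_distrib, hm.2]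

theorem mulVec_apply_le_of_isMinOn_stdSimplex {A : Matrix ι ι ℝ} (hA : A.IsSymm) {m : ι → ℝ}
    (hmS : m ∈ stdSimplex ℝ ι) (hmin : IsMinOn (fun x => x ⬝ᵥ A *ᵥ x) (stdSimplex ℝ ι) m)
    {i : ι} (hi : 0 < m i) (j : ι) : (A *ᵥ m) i ≤ (A *ᵥ m) j := by
  set v : ι → ℝ := Pi.single j 1 - Pi.single i 1
  have hvAm : v ⬝ᵥ A *ᵥ m = (A *ᵥ m) j - (A *ᵥ m) i := by
    simp [v, sub_dotProduct, single_dotProduct]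
  have hslope : ∀ᶠ t in 𝓝[>] 0, 0 ≤ 2 * (v ⬝ᵥ A *ᵥ m) + t * (v ⬝ᵥ A *ᵥ v) := by
    filter_upwards [Ioo_mem_nhdsGT hi] with t ht
    have hle := isMinOn_iff.mp hmin _
      (add_smul_single_sub_single_mem_stdSimplex hmS i j ht.1.le ht.2.le)
    rw [hA.dotProduct_mulVec_add_smul] at hle
    nlinarith [ht.1]
  have hlim : Tendsto (fun t => 2 * (v ⬝ᵥ A *ᵥ m) + t * (v ⬝ᵥ A *ᵥ v)) (𝓝[>] 0)
      (𝓝 (2 * (v ⬝ᵥ A *ᵥ m))) := by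
    apply tendsto_nhdsWithin_of_tendsto_nhds
    simpa using (Continuous.tendsto (by fun_prop) 0 :
      Tendsto (fun t => 2 * (v ⬝ᵥ A *ᵥ m) + t * (v ⬝ᵥ A *ᵥ v)) (𝓝 0) _)
  have := ge_of_tendsto hlim hslope
  linarith

end StdSimplex

theorem stmt_3 {n : ℕ} (A : Matrix (Fin n) (Fin n) ℝ) (hA : A.IsSymm)
    (h : ∀ p : Fin n → ℝ, (∀ i, 0 ≤ p i) → ∑ i, p i = 1 →
      ∃ i, 0 < p i ∧ 0 < A.mulVec p i) :
    ∀ q : Fin n → ℝ, (∀ i, 0 ≤ q i) → ∑ i, q i = 1 →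
      0 < q ⬝ᵥ A.mulVec q := by
  intro q hq₀ hq₁
  obtain ⟨m, hmS, hmin⟩ := (isCompact_stdSimplex ℝ (Fin n)).exists_isMinOn ⟨q, hq₀, hq₁⟩
    (by fun_prop : Continuous fun x : Fin n → ℝ => x ⬝ᵥ A *ᵥ x).continuousOn
  obtain ⟨i, hi, hAmi⟩ := h m hmS.1 hmS.2
  calc 0 < (A *ᵥ m) i := hAmi
    _ = ∑ k, m k * (A *ᵥ m) i := by rw [← Finset.sum_mul, hmS.2, one_mul]
    _ ≤ ∑ k, m k * (A *ᵥ m) k := Finset.sum_le_sum fun k _ =>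
      mul_le_mul_of_nonneg_left (mulVec_apply_le_of_isMinOn_stdSimplex hA hmS hmin hi k) (hmS.1 k)
    _ = m ⬝ᵥ A *ᵥ m := rfl
    _ ≤ q ⬝ᵥ A *ᵥ q := isMinOn_iff.mp hmin q ⟨hq₀, hq₁⟩
end

section
/- Let (Ω, ℬ) be a measurable space and f : Ω × Ω → ℝ a bounded measurable symmetric function. Then either there exists a probability measure P on ℬ such that ∫ f(x,y) P(dy) ≤ 0 for P-almost every x, or for every probability measure P on ℬ one has ∬ f(x,y) P(dx)P(dy) > 0. -/
/-!
Let `α` be the infimum of the energy `E(P) = ∬ f dP dP` over probability measures and let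
`g_P = ∫ f(·, y) P(dy)` be the potential. By symmetry of `f`, mixing `P` with a point mass,
`(1 - t) P + t δ_x`, has energy `E(P) + 2t (g_P(x) - E(P)) + O(t²)`; hence the potential of a
`t²`-near-minimizer is at least `α - O(t)` everywhere. If some `P₀` with `E(P₀) ≤ 0` is a minimizer,
its potential is therefore `≥ E(P₀)` everywhere and its mean is `E(P₀)`, so `g_{P₀} = E(P₀) ≤ 0`
almost everywhere. Otherwise `α < 0`; for a near-minimizer `P`, Markov's inequality makes
`A = {g_P ≥ α / 2}` small, and conditioning `P` on `Aᶜ` moves the potential by at most `C · P(A)`,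
so it stays nonpositive on `Aᶜ`.
-/

open MeasureTheory ProbabilityTheory

namespace Interaction

variable {Ω : Type*} [MeasurableSpace Ω] {f : Ω → Ω → ℝ} {C : ℝ}

noncomputable def potential (f : Ω → Ω → ℝ) (P : Measure Ω) (x : Ω) : ℝ := ∫ y, f x y ∂P

noncomputable def energy (f : Ω → Ω → ℝ) (P : Measure Ω) : ℝ := ∫ x, potential f P x ∂P

lemma integrable_of_abs_le {h : Ω → ℝ} (P : Measure Ω) [IsFiniteMeasure P] (hm : Measurable h)
    (hC : ∀ x, |h x| ≤ C) : Integrable h P :=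
  .of_bound hm.aestronglyMeasurable C (.of_forall fun x => (Real.norm_eq_abs _).trans_le (hC x))

lemma abs_integral_le_of_abs_le {h : Ω → ℝ} (P : Measure Ω) [IsProbabilityMeasure P]
    (hC : ∀ x, |h x| ≤ C) : |∫ x, h x ∂P| ≤ C := by
  simpa using norm_integral_le_of_norm_le_const (μ := P)
    (.of_forall fun x => (Real.norm_eq_abs (h x)).trans_le (hC x))

lemma sub_mul_measureReal_ge_le_integral_sub {h : Ω → ℝ} {m : ℝ} (P : Measure Ω)
    [IsProbabilityMeasure P] (hm : ∀ x, m ≤ h x) (hi : Integrable h P) (s : ℝ) :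
    (s - m) * P.real {x | s ≤ h x} ≤ ∫ x, h x ∂P - m := by
  have := mul_meas_ge_le_integral_of_nonneg (.of_forall fun x => sub_nonneg.mpr (hm x))
    (hi.sub (integrable_const m)) (s - m)
  simpa only [sub_le_sub_iff_right, integral_sub hi (integrable_const m), integral_const,
    probReal_univ, one_smul] using this

lemma measurable_potential (hf : Measurable (Function.uncurry f)) (P : Measure Ω) [SFinite P] :
    Measurable (potential f P) :=
  (hf.stronglyMeasurable.integral_prod_right' (ν := P)).measurable

lemma abs_potential_le (hC : ∀ x y, |f x y| ≤ C) (P : Measure Ω) [IsProbabilityMeasure P]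
    (x : Ω) : |potential f P x| ≤ C :=
  abs_integral_le_of_abs_le P (hC x)

lemma abs_energy_le (hC : ∀ x y, |f x y| ≤ C) (P : Measure Ω) [IsProbabilityMeasure P] :
    |energy f P| ≤ C :=
  abs_integral_le_of_abs_le P (abs_potential_le hC P)

lemma potential_cond_compl_nonpos (hf : Measurable (Function.uncurry f))
    (hC : ∀ x y, |f x y| ≤ C) {P : Measure Ω} [IsFiniteMeasure P] {A : Set Ω}
    (hA : MeasurableSet A) {x : Ω} (hx : potential f P x + C * P.real A ≤ 0) :
    potential f P[|Aᶜ] x ≤ 0 := by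
  have hint : Integrable (f x) P := integrable_of_abs_le P (hf.comp measurable_prodMk_left) (hC x)
  have hdiff := norm_integral_sub_setIntegral_le
    (.of_forall fun y => (Real.norm_eq_abs (f x y)).trans_le (hC x y)) hA.compl hint
  rw [compl_compl, Real.norm_eq_abs, abs_sub_comm] at hdiff
  have hAc : ∫ y in Aᶜ, f x y ∂P ≤ 0 := by
    have := (le_abs_self _).trans hdiff
    rw [potential] at hx
    linarith
  rw [potential, ProbabilityTheory.cond, integral_smul_measure, smul_eq_mul]
  exact mul_nonpos_of_nonneg_of_nonpos ENNReal.toReal_nonneg hAc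

noncomputable def mixDirac (P : Measure Ω) (x : Ω) (t : ℝ) : Measure Ω :=
  ENNReal.ofReal (1 - t) • P + ENNReal.ofReal t • Measure.dirac x

section mixDirac

variable {P : Measure Ω} {t : ℝ}

lemma isProbabilityMeasure_mixDirac [IsProbabilityMeasure P] (x : Ω) (ht₀ : 0 ≤ t)
    (ht₁ : t ≤ 1) : IsProbabilityMeasure (mixDirac P x t) := by
  constructor
  simp only [mixDirac, Measure.add_apply, Measure.smul_apply, smul_eq_mul, measure_univ, mul_one]
  rw [← ENNReal.ofReal_add (by linarith) ht₀]
  norm_num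

lemma integral_mixDirac {h : Ω → ℝ} (hm : Measurable h) (hi : Integrable h P) (x : Ω)
    (ht₀ : 0 ≤ t) (ht₁ : t ≤ 1) :
    ∫ u, h u ∂(mixDirac P x t) = (1 - t) * ∫ u, h u ∂P + t * h x := by
  have hδ : Integrable h (Measure.dirac x) :=
    integrable_dirac' hm.stronglyMeasurable enorm_lt_top
  rw [mixDirac, integral_add_measure (hi.smul_measure ENNReal.ofReal_ne_top)
      (hδ.smul_measure ENNReal.ofReal_ne_top), integral_smul_measure, integral_smul_measure,
    integral_dirac' _ _ hm.stronglyMeasurable, ENNReal.toReal_ofReal (by linarith),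
    ENNReal.toReal_ofReal ht₀, smul_eq_mul, smul_eq_mul]

variable (hf : Measurable (Function.uncurry f)) (hC : ∀ x y, |f x y| ≤ C)
include hf hC

lemma potential_mixDirac [IsFiniteMeasure P] (x u : Ω) (ht₀ : 0 ≤ t) (ht₁ : t ≤ 1) :
    potential f (mixDirac P x t) u = (1 - t) * potential f P u + t * f u x :=
  have hm : Measurable (f u) := hf.comp measurable_prodMk_left
  integral_mixDirac hm (integrable_of_abs_le P hm (hC u)) x ht₀ ht₁

lemma energy_mixDirac (hsymm : ∀ x y, f x y = f y x) [IsProbabilityMeasure P] (x : Ω)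
    (ht₀ : 0 ≤ t) (ht₁ : t ≤ 1) :
    energy f (mixDirac P x t) =
      (1 - t) ^ 2 * energy f P + 2 * t * (1 - t) * potential f P x + t ^ 2 * f x x := by
  have := isProbabilityMeasure_mixDirac (P := P) x ht₀ ht₁
  have hm := measurable_potential hf (mixDirac P x t)
  have hfx : potential f P x = ∫ u, f u x ∂P := by simp only [potential, hsymm x]
  have hmx : Measurable fun u => f u x := hf.comp measurable_prodMk_right
  rw [energy, integral_mixDirac hm (integrable_of_abs_le P hm (abs_potential_le hC _)) x ht₀ ht₁,
    potential_mixDirac hf hC x x ht₀ ht₁]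
  simp_rw [potential_mixDirac hf hC x _ ht₀ ht₁]
  rw [integral_add
      ((integrable_of_abs_le P (measurable_potential hf P) (abs_potential_le hC P)).const_mul _)
      ((integrable_of_abs_le P hmx fun u => hC u x).const_mul _),
    integral_const_mul, integral_const_mul, ← hfx, energy]
  ring

end mixDirac

section minimizer

variable (hf : Measurable (Function.uncurry f)) (hC : ∀ x y, |f x y| ≤ C)
  (hsymm : ∀ x y, f x y = f y x) {α : ℝ}
  (hmin : ∀ Q : Measure Ω, IsProbabilityMeasure Q → α ≤ energy f Q)
include hf hC hsymm hmin

lemma potential_ge_of_energy_le_add_sq {P : Measure Ω} [IsProbabilityMeasure P] {t : ℝ}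
    (hP : energy f P ≤ α + t ^ 2) (ht₀ : 0 < t) (ht₁ : t ≤ 1 / 2) (x : Ω) :
    α - (2 * C + 1) * t ≤ potential f P x := by
  have hmix := hmin _ (isProbabilityMeasure_mixDirac (P := P) x ht₀.le (by linarith))
  rw [energy_mixDirac hf hC hsymm x ht₀.le (by linarith)] at hmix
  have hfxx : f x x ≤ C := (abs_le.mp (hC x x)).2
  have hEC : -C ≤ energy f P := (abs_le.mp (abs_energy_le hC P)).1
  have hC₀ : 0 ≤ C := (abs_nonneg _).trans (hC x x)
  have hbracket : -α + (1 - t) ^ 2 - 2 * (2 * C + 1) * (1 - t) + C ≤ 0 := by nlinarith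
  by_contra! hlt
  have h2t : 0 < 2 * t * (1 - t) := by nlinarith
  linarith [mul_lt_mul_of_pos_left hlt h2t, mul_le_mul_of_nonneg_left hP (sq_nonneg (1 - t)),
    mul_le_mul_of_nonneg_left hfxx (sq_nonneg t),
    mul_nonpos_of_nonneg_of_nonpos (sq_nonneg t) hbracket]

lemma le_potential_of_energy_le {P : Measure Ω} [IsProbabilityMeasure P] (hP : energy f P ≤ α)
    (x : Ω) : α ≤ potential f P x := by
  have hK : 0 < 2 * C + 1 := by linarith [(abs_nonneg _).trans (hC x x)]
  refine le_of_forall_pos_le_add fun ε hε => ?_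
  set t := min (1 / 2) (ε / (2 * C + 1))
  have ht₀ : 0 < t := lt_min one_half_pos (div_pos hε hK)
  have hKt : (2 * C + 1) * t ≤ ε := by
    rw [← le_div_iff₀' hK]
    exact min_le_right _ _
  have := potential_ge_of_energy_le_add_sq hf hC hsymm hmin (by nlinarith) ht₀
    (min_le_left _ _) x
  linarith

lemma ae_potential_eq_of_energy_le {P : Measure Ω} [IsProbabilityMeasure P]
    (hP : energy f P ≤ α) : ∀ᵐ x ∂P, potential f P x = α := by
  have hint : Integrable (potential f P) P :=
    integrable_of_abs_le P (measurable_potential hf P) (abs_potential_le hC P)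
  have hzero : ∫ x, (potential f P x - α) ∂P = 0 := by
    rw [integral_sub hint (integrable_const α), integral_const, probReal_univ, one_smul]
    exact sub_eq_zero.mpr (le_antisymm hP (hmin P inferInstance))
  filter_upwards [(integral_eq_zero_iff_of_nonneg
    (fun x => sub_nonneg.mpr (le_potential_of_energy_le hf hC hsymm hmin hP x))
    (hint.sub (integrable_const α))).mp hzero] with x hx
  exact sub_eq_zero.mp hx

lemma exists_ae_potential_nonpos_of_neg (hα : α < 0)
    (happrox : ∀ ε > 0, ∃ P : Measure Ω, IsProbabilityMeasure P ∧ energy f P ≤ α + ε) :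
    ∃ P : Measure Ω, IsProbabilityMeasure P ∧ ∀ᵐ x ∂P, potential f P x ≤ 0 := by
  set K := 2 * C + 1
  obtain ⟨P₁, _, -⟩ := happrox 1 one_pos
  have hC₀ : 0 ≤ C := (abs_nonneg _).trans (abs_energy_le hC P₁)
  obtain ⟨t, ht₀, ht₁, hts⟩ : ∃ t : ℝ, 0 < t ∧ t ≤ 1 / 2 ∧ 4 * (C + 1) * (K + 1) * t ≤ α ^ 2 :=
    ⟨min (1 / 2) (α ^ 2 / (4 * (C + 1) * (K + 1))),
      lt_min one_half_pos (div_pos (by nlinarith) (by positivity)), min_le_left _ _,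
      (le_div_iff₀' (by positivity)).mp (min_le_right _ _)⟩
  obtain ⟨P, _, hEP⟩ := happrox (t ^ 2) (by positivity)
  have hEC : -C ≤ energy f P := (abs_le.mp (abs_energy_le hC P)).1
  set A := {x | α / 2 ≤ potential f P x}
  have hA : MeasurableSet A := measurableSet_le measurable_const (measurable_potential hf P)
  have hδ₀ : 0 ≤ P.real A := measureReal_nonneg
  -- The potential is at least `α - K t` and close to `α` on average, so it rarely exceeds `α / 2`.
  have hmarkov : (α / 2 - (α - K * t)) * P.real A ≤ energy f P - (α - K * t) :=
    sub_mul_measureReal_ge_le_integral_sub P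
      (potential_ge_of_energy_le_add_sq hf hC hsymm hmin hEP ht₀ ht₁)
      (integrable_of_abs_le P (measurable_potential hf P) (abs_potential_le hC P)) _
  have hsmall : (C + 1) * P.real A ≤ -α / 2 := by
    have : -α / 2 * P.real A ≤ (K + 1) * t := by
      nlinarith [mul_nonneg (mul_nonneg (by positivity : (0 : ℝ) ≤ K) ht₀.le) hδ₀]
    nlinarith
  have hAc : P Aᶜ ≠ 0 := by
    have : P.real A < 1 := by nlinarith
    intro h
    have := probReal_compl_eq_one_sub (μ := P) hA
    rw [measureReal_def, h] at this
    simp at this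
    linarith
  refine ⟨P[|Aᶜ], cond_isProbabilityMeasure hAc, ?_⟩
  filter_upwards [ae_cond_mem hA.compl] with x hx
  have : potential f P x < α / 2 := not_le.mp hx
  exact potential_cond_compl_nonpos hf hC hA (by nlinarith)

end minimizer

lemma exists_ae_potential_nonpos_of_energy_nonpos (hf : Measurable (Function.uncurry f))
    (hC : ∀ x y, |f x y| ≤ C) (hsymm : ∀ x y, f x y = f y x) {P₀ : Measure Ω}
    [IsProbabilityMeasure P₀] (hP₀ : energy f P₀ ≤ 0) :
    ∃ P : Measure Ω, IsProbabilityMeasure P ∧ ∀ᵐ x ∂P, potential f P x ≤ 0 := by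
  by_cases hmin : ∀ Q : Measure Ω, IsProbabilityMeasure Q → energy f P₀ ≤ energy f Q
  · exact ⟨P₀, inferInstance, (ae_potential_eq_of_energy_le hf hC hsymm hmin le_rfl).mono
      fun x hx => hx.trans_le hP₀⟩
  push Not at hmin
  obtain ⟨Q, hQ, hQP₀⟩ := hmin
  let energyOf : {Q : Measure Ω // IsProbabilityMeasure Q} → ℝ := fun Q => energy f Q.1
  have hbdd : BddBelow (Set.range energyOf) := ⟨-C, by
    rintro _ ⟨⟨Q, _⟩, rfl⟩
    exact (abs_le.mp (abs_energy_le hC Q)).1⟩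
  refine exists_ae_potential_nonpos_of_neg hf hC hsymm (α := ⨅ Q, energyOf Q)
    (fun Q hQ => ciInf_le hbdd ⟨Q, hQ⟩)
    ((ciInf_le hbdd ⟨Q, hQ⟩).trans_lt (hQP₀.trans_le hP₀)) fun ε hε => ?_
  have : Nonempty {Q : Measure Ω // IsProbabilityMeasure Q} := ⟨⟨Q, hQ⟩⟩
  obtain ⟨⟨P, hP⟩, hPε⟩ := exists_lt_of_ciInf_lt (lt_add_of_pos_right (⨅ Q, energyOf Q) hε)
  exact ⟨P, hP, hPε.le⟩

end Interaction

open Interaction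

theorem stmt_4 {Ω : Type*} [MeasurableSpace Ω] (f : Ω → Ω → ℝ)
    (hmeas : Measurable (Function.uncurry f))
    (hbdd : ∃ C : ℝ, ∀ x y, |f x y| ≤ C)
    (hsymm : ∀ x y, f x y = f y x) :
    (∃ P : Measure Ω, IsProbabilityMeasure P ∧
      ∀ᵐ x ∂P, ∫ y, f x y ∂P ≤ 0) ∨
    (∀ P : Measure Ω, IsProbabilityMeasure P →
      0 < ∫ x, ∫ y, f x y ∂P ∂P) := by
  obtain ⟨C, hC⟩ := hbdd
  refine or_iff_not_imp_right.mpr fun hpos => ?_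
  push Not at hpos
  obtain ⟨P₀, _, hP₀⟩ := hpos
  exact exists_ae_potential_nonpos_of_energy_nonpos hmeas hC hsymm hP₀
end

section
/- Let (Ω, ℬ) be a measurable space, f : Ω × Ω → ℝ a bounded measurable symmetric function, and μ a probability measure on ℬ. If Q(ν, ν) := ∬ f dν dν > 0 for every finitely supported probability measure ν (i.e. every convex combination of Dirac measures), then Q(μ, μ) ≥ 0. -/
open MeasureTheory

lemma pi_map_eval' {Ω : Type*} [MeasurableSpace Ω] (μ : Measure Ω) [IsProbabilityMeasure μ]
    (n : ℕ) (i : Fin n) :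
    Measure.map (fun x : Fin n → Ω => x i) (Measure.pi fun _ => μ) = μ := by
  ext s hs
  rw [Measure.map_apply (measurable_pi_apply i) hs]
  have hpre : (fun x : Fin n → Ω => x i) ⁻¹' s =
      Set.pi Set.univ (fun k => if k = i then s else Set.univ) := by
    ext x
    simp only [Set.mem_preimage, Set.mem_pi, Set.mem_univ, true_implies]
    constructor
    · intro h k; split <;> simp_all
    · intro h; have := h i; simpa using this
  rw [hpre, Measure.pi_pi]
  rw [show (fun k : Fin n => μ (if k = i then s else Set.univ)) =
      fun k : Fin n => if k = i then μ s else 1 by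
    funext k; split <;> simp]
  simp [Finset.prod_ite_eq']

lemma pi_map_pair' {Ω : Type*} [MeasurableSpace Ω] (μ : Measure Ω) [IsProbabilityMeasure μ]
    (n : ℕ) (i j : Fin n) (hij : i ≠ j) :
    Measure.map (fun x : Fin n → Ω => (x i, x j)) (Measure.pi fun _ => μ) = μ.prod μ := by
  refine (Measure.prod_eq fun s t hs ht => ?_).symm
  rw [Measure.map_apply ((measurable_pi_apply i).prodMk (measurable_pi_apply j)) (hs.prod ht)]
  have hpre : (fun x : Fin n → Ω => (x i, x j)) ⁻¹' (s ×ˢ t) =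
      Set.pi Set.univ (fun k => if k = i then s else if k = j then t else Set.univ) := by
    ext x
    simp only [Set.mem_preimage, Set.mem_prod, Set.mem_pi, Set.mem_univ, true_implies]
    constructor
    · rintro ⟨h1, h2⟩ k
      split
      · simp_all
      · split
        · simp_all
        · simp
    · intro h
      refine ⟨?_, ?_⟩
      · have := h i; simpa using this
      · have := h j; simpa [hij.symm] using this
  rw [hpre, Measure.pi_pi]
  rw [show (fun k : Fin n => μ (if k = i then s else if k = j then t else Set.univ)) =
      fun k : Fin n => (if k = i then μ s else 1) * (if k = j then μ t else 1) by
    funext k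
    rcases eq_or_ne k i with rfl | hki
    · simp [hij]
    · rcases eq_or_ne k j with rfl | hkj
      · simp [hki]
      · simp [hki, hkj]]
  rw [Finset.prod_mul_distrib]
  simp [Finset.prod_ite_eq']

theorem stmt_5 {Ω : Type*} [MeasurableSpace Ω] (f : Ω → Ω → ℝ)
    (hmeas : Measurable (Function.uncurry f))
    (hbdd : ∃ C : ℝ, ∀ x y, |f x y| ≤ C)
    (hsymm : ∀ x y, f x y = f y x)
    (μ : Measure Ω) [IsProbabilityMeasure μ]
    (hfin : ∀ (n : ℕ) (x : Fin n → Ω) (p : Fin n → ℝ),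
      (∀ i, 0 ≤ p i) → ∑ i, p i = 1 →
      0 < ∑ i, ∑ j, p i * p j * f (x i) (x j)) :
    0 ≤ ∫ x, ∫ y, f x y ∂μ ∂μ := by
  obtain ⟨C, hC⟩ := hbdd
  set Q : ℝ := ∫ x, ∫ y, f x y ∂μ ∂μ with hQ
  set D : ℝ := ∫ y, f y y ∂μ with hD
  have hmd : Measurable fun y : Ω => f y y :=
    hmeas.comp (measurable_id.prodMk measurable_id)
  have hint : Integrable (Function.uncurry f) (μ.prod μ) := by
    refine (integrable_const C).mono' hmeas.aestronglyMeasurable (ae_of_all _ fun p => ?_)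
    simpa [Function.uncurry] using hC p.1 p.2
  have hQprod : Q = ∫ p : Ω × Ω, f p.1 p.2 ∂(μ.prod μ) := by
    rw [hQ]; exact integral_integral hint
  have hDC : D ≤ C := by
    have h1 : ‖D‖ ≤ ∫ _, C ∂μ := by
      refine norm_integral_le_of_norm_le (integrable_const C) (ae_of_all _ fun y => ?_)
      simpa using hC y y
    rw [integral_const] at h1
    simp only [measure_univ, ENNReal.toReal_one, one_smul, smul_eq_mul] at h1
    calc D ≤ ‖D‖ := le_abs_self D
    _ ≤ C := by simpa using h1
  -- key inequality for each n = k + 2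
  have key : ∀ k : ℕ, 0 ≤ ((k : ℝ) + 1) * Q + D := by
    intro k
    set n : ℕ := k + 2 with hn
    set π : Measure (Fin n → Ω) := Measure.pi (fun _ => μ) with hπ
    have hmij : ∀ i j : Fin n, Measurable fun x : Fin n → Ω => f (x i) (x j) := fun i j => by
      have h : Measurable fun a : Fin n → Ω => (a i, a j) :=
        (measurable_pi_apply i).prodMk (measurable_pi_apply j)
      exact hmeas.comp h
    have hintij : ∀ i j : Fin n, Integrable (fun x : Fin n → Ω => f (x i) (x j)) π := by
      intro i j
      refine (integrable_const C).mono' (hmij i j).aestronglyMeasurable (ae_of_all _ fun x => ?_)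
      simpa using hC (x i) (x j)
    have hI : ∀ i j : Fin n, ∫ x, f (x i) (x j) ∂π = if i = j then D else Q := by
      intro i j
      rcases eq_or_ne i j with rfl | hij
      · rw [if_pos rfl, hD, ← pi_map_eval' μ n i,
          integral_map (measurable_pi_apply i).aemeasurable hmd.aestronglyMeasurable]
      · rw [if_neg hij, hQprod, ← pi_map_pair' μ n i j hij,
          integral_map ((measurable_pi_apply i).prodMk (measurable_pi_apply j)).aemeasurable
            hmeas.aestronglyMeasurable]
    -- pointwise positivity
    have hpos : ∀ x : Fin n → Ω, 0 ≤ ∑ i, ∑ j, f (x i) (x j) := by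
      intro x
      have h := hfin n x (fun _ => (n : ℝ)⁻¹) (fun _ => by positivity)
        (by
          simp only [Finset.sum_const, Finset.card_univ, Fintype.card_fin, nsmul_eq_mul]
          rw [mul_inv_cancel₀ (Nat.cast_ne_zero.mpr (by omega))])
      have hrw : ∑ i, ∑ j, (n : ℝ)⁻¹ * (n : ℝ)⁻¹ * f (x i) (x j)
          = (n : ℝ)⁻¹ * (n : ℝ)⁻¹ * ∑ i, ∑ j, f (x i) (x j) := by
        rw [Finset.mul_sum]
        exact Finset.sum_congr rfl fun i _ => by rw [Finset.mul_sum]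
      rw [hrw] at h
      have hninv : (0 : ℝ) < (n : ℝ)⁻¹ * (n : ℝ)⁻¹ := by positivity
      nlinarith
    have hSint : 0 ≤ ∫ x, ∑ i, ∑ j, f (x i) (x j) ∂π :=
      integral_nonneg hpos
    rw [integral_finset_sum _ (fun i _ => integrable_finset_sum _ (fun j _ => hintij i j))] at hSint
    simp only [integral_finset_sum _ (fun j _ => hintij _ j), hI] at hSint
    -- compute the double sum of ite
    have hsum : ∑ i : Fin n, ∑ j : Fin n, (if i = j then D else Q)
        = (n : ℝ) * ((n : ℝ) * Q + (D - Q)) := by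
      have hinner : ∀ i : Fin n, ∑ j : Fin n, (if i = j then D else Q)
          = (n : ℝ) * Q + (D - Q) := by
        intro i
        have : ∀ j : Fin n, (if i = j then D else Q) = Q + (if i = j then D - Q else 0) := by
          intro j; split <;> ring
        simp only [this, Finset.sum_add_distrib, Finset.sum_const, Finset.card_univ,
          Fintype.card_fin, Finset.sum_ite_eq, Finset.mem_univ, if_pos, nsmul_eq_mul]
      simp only [hinner, Finset.sum_const, Finset.card_univ, Fintype.card_fin, nsmul_eq_mul]
    rw [hsum] at hSint
    have hnpos : (0 : ℝ) < (n : ℝ) := by positivity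
    have h2 : 0 ≤ (n : ℝ) * Q + (D - Q) := by
      by_contra hneg
      push_neg at hneg
      nlinarith
    have hcast : (n : ℝ) = (k : ℝ) + 2 := by push_cast [hn]; ring
    rw [hcast] at h2
    linarith
  -- conclude
  by_contra h
  push_neg at h
  obtain ⟨k, hk⟩ := exists_nat_gt (C / (-Q))
  have hQneg : 0 < -Q := by linarith
  have h1 := key k
  have h2 : C / (-Q) < (k : ℝ) + 1 := by linarith [Nat.cast_nonneg (α := ℝ) k]
  have h3 : C < ((k : ℝ) + 1) * (-Q) := by
    rwa [div_lt_iff₀ hQneg] at h2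
  nlinarith
end

section
/- Let μ be a probability measure, f bounded measurable symmetric, and set Q(λ, ν) = ∬ f dλ dν. Suppose Q(μ, μ) = 0 and Q(μₜ, μₜ) ≥ 0 for all probability measures μₜ = (1−t)μ + tν, 0 ≤ t ≤ 1, where ν is any probability measure absolutely continuous with respect to μ. Then the set {x : ∫ f(x,y) μ(dy) < 0} has μ-measure 0 or the set {x : ∫ f(x,y) μ(dy) > 0} has μ-measure 0. -/
open MeasureTheory Function ENNReal Filter Topology Set ProbabilityTheory

/-!
Write `g x = ∫ f(x, y) dμ(y)`. By bilinearity and symmetry,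
`Q(μₜ, μₜ) = (1-t)² Q(μ, μ) + 2t(1-t) ∫ g dν + t² Q(ν, ν)`, and with `Q(μ, μ) = 0`
the nonnegativity of this for all small `t > 0` forces `∫ g dν ≥ 0`. Taking for `ν`
the conditional measure `μ(· | g < 0)` then shows `μ {g < 0} = 0`, so in fact the
first alternative always holds.
-/

lemma nonneg_of_forall_mul_add_mul_sq_nonneg {a b : ℝ}
    (h : ∀ t ∈ Ioc (0 : ℝ) 1, 0 ≤ a * t + b * t ^ 2) : 0 ≤ a := by
  have hlim : Tendsto (fun t => a + b * t) (𝓝[>] 0) (𝓝 a) := by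
    have : Continuous fun t : ℝ => a + b * t := by fun_prop
    simpa using (this.tendsto 0).mono_left nhdsWithin_le_nhds
  refine ge_of_tendsto hlim ?_
  filter_upwards [Ioc_mem_nhdsGT zero_lt_one] with t ht
  have : 0 ≤ t * (a + b * t) := by convert h t ht using 1; ring
  exact nonneg_of_mul_nonneg_right this ht.1

lemma integral_ofReal_smul_add_ofReal_smul_measure {α : Type*} [MeasurableSpace α]
    {μ ν : Measure α} {h : α → ℝ} (hμ : Integrable h μ) (hν : Integrable h ν)
    {s t : ℝ} (hs : 0 ≤ s) (ht : 0 ≤ t) :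
    ∫ x, h x ∂(ENNReal.ofReal s • μ + ENNReal.ofReal t • ν) =
      s * ∫ x, h x ∂μ + t * ∫ x, h x ∂ν := by
  rw [integral_add_measure (hμ.smul_measure ofReal_ne_top) (hν.smul_measure ofReal_ne_top),
    integral_smul_measure, integral_smul_measure, toReal_ofReal hs, toReal_ofReal ht,
    smul_eq_mul, smul_eq_mul]

lemma measure_setOf_neg_eq_zero_of_forall_integral_nonneg {α : Type*} [MeasurableSpace α]
    {μ : Measure α} [IsFiniteMeasure μ] {g : α → ℝ} (hg : Measurable g)
    (hgi : Integrable g μ)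
    (h : ∀ ν : Measure α, IsProbabilityMeasure ν → ν ≪ μ → 0 ≤ ∫ x, g x ∂ν) :
    μ {x | g x < 0} = 0 := by
  set B := {x | g x < 0}
  have hB : MeasurableSet B := measurableSet_lt hg measurable_const
  by_contra hB0
  have hcond := h μ[|B] (cond_isProbabilityMeasure hB0) cond_absolutelyContinuous
  rw [ProbabilityTheory.cond, integral_smul_measure, smul_eq_mul, toReal_inv] at hcond
  have hBnonneg : 0 ≤ ∫ x in B, g x ∂μ :=
    nonneg_of_mul_nonneg_right hcond (inv_pos.2 (toReal_pos hB0 (measure_ne_top μ B)))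
  have hBneg : 0 < ∫ x in B, -g x ∂μ := by
    rw [setIntegral_pos_iff_support_of_nonneg_ae
      ((ae_restrict_mem hB).mono fun x hx => (neg_pos.2 hx).le) hgi.integrableOn.neg,
      inter_eq_self_of_subset_right (s := support fun x => -g x) (t := B) fun x hx =>
        neg_ne_zero.2 (ne_of_lt hx)]
    exact pos_iff_ne_zero.2 hB0
  rw [integral_neg] at hBneg
  linarith

section BoundedKernel

variable {Ω : Type*} [MeasurableSpace Ω] {f : Ω → Ω → ℝ} {C : ℝ}

lemma integrable_uncurry_of_abs_le (hf : Measurable (uncurry f)) (hC : ∀ x y, |f x y| ≤ C)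
    (μ ν : Measure Ω) [IsFiniteMeasure μ] [IsFiniteMeasure ν] :
    Integrable (uncurry f) (μ.prod ν) :=
  .of_bound hf.aestronglyMeasurable C (ae_of_all _ fun p => hC p.1 p.2)

lemma integrable_of_abs_le (hf : Measurable (uncurry f)) (hC : ∀ x y, |f x y| ≤ C)
    (ν : Measure Ω) [IsFiniteMeasure ν] (x : Ω) : Integrable (f x) ν :=
  .of_bound hf.of_uncurry_left.aestronglyMeasurable C (ae_of_all _ (hC x))

lemma integrable_integral_of_abs_le (hf : Measurable (uncurry f)) (hC : ∀ x y, |f x y| ≤ C)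
    (μ ν : Measure Ω) [IsFiniteMeasure μ] [IsFiniteMeasure ν] :
    Integrable (fun x => ∫ y, f x y ∂ν) μ :=
  (integrable_uncurry_of_abs_le hf hC μ ν).integral_prod_left

lemma integral_integral_comm_of_symm (hf : Measurable (uncurry f)) (hC : ∀ x y, |f x y| ≤ C)
    (hsymm : ∀ x y, f x y = f y x) (μ ν : Measure Ω) [IsFiniteMeasure μ]
    [IsFiniteMeasure ν] :
    ∫ x, ∫ y, f x y ∂ν ∂μ = ∫ x, ∫ y, f x y ∂μ ∂ν := by
  rw [integral_integral_swap (integrable_uncurry_of_abs_le hf hC μ ν)]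
  simp only [hsymm]

lemma integral_integral_ofReal_smul_add_ofReal_smul (hf : Measurable (uncurry f))
    (hC : ∀ x y, |f x y| ≤ C) (hsymm : ∀ x y, f x y = f y x)
    (μ ν : Measure Ω) [IsFiniteMeasure μ] [IsFiniteMeasure ν]
    {s t : ℝ} (hs : 0 ≤ s) (ht : 0 ≤ t) :
    ∫ x, ∫ y, f x y ∂(ENNReal.ofReal s • μ + ENNReal.ofReal t • ν)
        ∂(ENNReal.ofReal s • μ + ENNReal.ofReal t • ν) =
      s ^ 2 * ∫ x, ∫ y, f x y ∂μ ∂μ + 2 * s * t * ∫ x, ∫ y, f x y ∂μ ∂ν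
        + t ^ 2 * ∫ x, ∫ y, f x y ∂ν ∂ν := by
  have hg := integrable_integral_of_abs_le hf hC
  have hinner : ∀ x, ∫ y, f x y ∂(ENNReal.ofReal s • μ + ENNReal.ofReal t • ν) =
      s * ∫ y, f x y ∂μ + t * ∫ y, f x y ∂ν := fun x =>
    integral_ofReal_smul_add_ofReal_smul_measure (integrable_of_abs_le hf hC μ x)
      (integrable_of_abs_le hf hC ν x) hs ht
  have hsum : ∀ (ρ : Measure Ω) [IsFiniteMeasure ρ],
      Integrable (fun x => s * ∫ y, f x y ∂μ + t * ∫ y, f x y ∂ν) ρ := fun ρ _ =>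
    ((hg ρ μ).const_mul s).add ((hg ρ ν).const_mul t)
  simp_rw [hinner]
  rw [integral_ofReal_smul_add_ofReal_smul_measure (hsum μ) (hsum ν) hs ht,
    integral_add ((hg μ μ).const_mul s) ((hg μ ν).const_mul t),
    integral_add ((hg ν μ).const_mul s) ((hg ν ν).const_mul t),
    integral_const_mul, integral_const_mul, integral_const_mul, integral_const_mul,
    integral_integral_comm_of_symm hf hC hsymm μ ν]
  ring

end BoundedKernel

theorem stmt_7 {Ω : Type*} [MeasurableSpace Ω]
    (μ : Measure Ω) [IsProbabilityMeasure μ]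
    (f : Ω → Ω → ℝ) (hmeas : Measurable (Function.uncurry f))
    (hbdd : ∃ C : ℝ, ∀ x y, |f x y| ≤ C)
    (hsymm : ∀ x y, f x y = f y x)
    (hQ0 : ∫ x, ∫ y, f x y ∂μ ∂μ = 0)
    (hQt : ∀ (ν : Measure Ω), IsProbabilityMeasure ν → ν ≪ μ →
      ∀ t : ℝ, 0 ≤ t → t ≤ 1 →
        0 ≤ ∫ x, ∫ y, f x y
              ∂(ENNReal.ofReal (1 - t) • μ + ENNReal.ofReal t • ν)
              ∂(ENNReal.ofReal (1 - t) • μ + ENNReal.ofReal t • ν)) :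
    μ {x | ∫ y, f x y ∂μ < 0} = 0 ∨ μ {x | 0 < ∫ y, f x y ∂μ} = 0 := by
  obtain ⟨C, hC⟩ := hbdd
  left
  refine measure_setOf_neg_eq_zero_of_forall_integral_nonneg
    (hmeas.stronglyMeasurable.integral_prod_right').measurable
    (integrable_integral_of_abs_le hmeas hC μ μ) fun ν hν hνμ => ?_
  set cross := ∫ x, ∫ y, f x y ∂μ ∂ν
  have hcross : 0 ≤ 2 * cross := by
    refine nonneg_of_forall_mul_add_mul_sq_nonneg
      (b := ∫ x, ∫ y, f x y ∂ν ∂ν - 2 * cross) fun t ht => ?_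
    have hQ := hQt ν hν hνμ t ht.1.le ht.2
    rw [integral_integral_ofReal_smul_add_ofReal_smul hmeas hC hsymm μ ν
      (sub_nonneg.2 ht.2) ht.1.le, hQ0] at hQ
    linarith
  linarith
end

section
/- Let Y₁, …, Yₙ₋₁, Yₙ be i.i.d. nonnegative and ε₁, …, εₙ i.i.d. uniform signs independent of the Yᵢ; set Sₖ = Σ_{i≤k} εᵢYᵢ. Then P(sgn(Sₙ) ≠ sgn(Sₙ₋₁)) ≤ P(|Sₙ₋₁| ≤ Yₙ) = 1 − 2·P(sgn(Sₙ) = −εₙ). -/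
/-!
Write `X = S - ε T`, so that `S = X + ε T` with `|ε T| ≤ T`: the sign of `S` can differ from
that of `X` only when `|X| ≤ T`. The complementary event `|X| > T` is the disjoint union of
`X + T < 0` and `X - T > 0`. On `ε = 1` the event `sgn S = -ε` is exactly the first, on `ε = -1`
the second; since `ε` is a fair sign independent of `(X, T)`, `P(sgn S = -ε)` is half of
`P(|X| > T)`.
-/

open MeasureTheory ProbabilityTheory

namespace Real

theorem sign_eq_neg_one_iff {x : ℝ} : sign x = -1 ↔ x < 0 := by
  refine ⟨fun h => ?_, sign_of_neg⟩
  rcases lt_trichotomy x 0 with hx | rfl | hx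
  · exact hx
  · norm_num [sign_zero] at h
  · norm_num [sign_of_pos hx] at h

theorem sign_eq_one_iff {x : ℝ} : sign x = 1 ↔ 0 < x := by
  simpa [sign_neg] using (sign_eq_neg_one_iff (x := -x))

theorem sign_add_of_abs_lt {x c : ℝ} (h : |c| < |x|) : sign (x + c) = sign x := by
  rcases lt_trichotomy x 0 with hx | rfl | hx
  · rw [abs_of_neg hx] at h
    rw [sign_of_neg hx, sign_of_neg (by linarith [le_abs_self c])]
  · exact absurd h (by simp)
  · rw [abs_of_pos hx] at h
    rw [sign_of_pos hx, sign_of_pos (by linarith [neg_abs_le c])]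

end Real

section

variable {Ω : Type*} [MeasurableSpace Ω] {P : Measure Ω}

theorem ae_eq_one_or_eq_neg_one [IsProbabilityMeasure P] {e : Ω → ℝ} (he : Measurable e)
    (he₁ : P {ω | e ω = 1} = 1 / 2) (he₂ : P {ω | e ω = -1} = 1 / 2) :
    ∀ᵐ ω ∂P, e ω = 1 ∨ e ω = -1 := by
  have hm₁ : MeasurableSet {ω | e ω = 1} := he (measurableSet_singleton 1)
  have hm₂ : MeasurableSet {ω | e ω = -1} := he (measurableSet_singleton (-1))
  have hdisj : Disjoint {ω | e ω = 1} {ω | e ω = -1} :=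
    Set.disjoint_left.mpr fun ω (h₁ : e ω = 1) (h₂ : e ω = -1) => by linarith
  rw [Filter.Eventually, Set.ofPred_or, mem_ae_iff_prob_eq_one (hm₁.union hm₂),
    measure_union hdisj hm₂, he₁, he₂, ENNReal.add_halves]

theorem ProbabilityTheory.iIndepFun.indepFun_of_measurable_iSup_compl {ι β γ : Type*}
    [MeasurableSpace β] [MeasurableSpace γ] {f : ι → Ω → β} (hf : iIndepFun f P)
    (hfm : ∀ i, Measurable (f i)) {k : ι} {g : Ω → γ}
    (hg : Measurable[⨆ i ∈ ({k}ᶜ : Set ι), MeasurableSpace.comap (f i) inferInstance] g) :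
    IndepFun g (f k) P := by
  have h := indep_iSup_of_disjoint (fun i => (hfm i).comap_le) hf.iIndep
    (disjoint_compl_left (a := ({k} : Set ι)))
  rw [iSup_singleton] at h
  exact (IndepFun_iff_Indep _ _ _).mpr (indep_of_indep_of_le_left h hg.comap_le)

variable {S T e : Ω → ℝ}

theorem measure_sign_ne_sign_sub_mul_le (hT : ∀ ω, 0 ≤ T ω)
    (he : ∀ᵐ ω ∂P, |e ω| ≤ 1) :
    P {ω | Real.sign (S ω) ≠ Real.sign (S ω - e ω * T ω)} ≤
      P {ω | |S ω - e ω * T ω| ≤ T ω} := by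
  refine measure_mono_ae ?_
  filter_upwards [he] with ω he hne
  by_contra hlt
  have hcT : |e ω * T ω| ≤ T ω := by
    rw [abs_mul, abs_of_nonneg (hT ω)]
    exact mul_le_of_le_one_left (hT ω) he
  apply hne
  simpa using Real.sign_add_of_abs_lt (x := S ω - e ω * T ω) (c := e ω * T ω)
    (hcT.trans_lt (not_le.mp hlt))

theorem two_mul_measure_sign_eq_neg [IsProbabilityMeasure P]
    (hS : Measurable S) (hTm : Measurable T) (he : Measurable e)
    (he₁ : P {ω | e ω = 1} = 1 / 2) (he₂ : P {ω | e ω = -1} = 1 / 2)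
    (hind : IndepFun (fun ω => (S ω - e ω * T ω, T ω)) e P) :
    2 * P {ω | Real.sign (S ω) = -e ω} =
      P {ω | S ω - e ω * T ω + T ω < 0} + P {ω | 0 < S ω - e ω * T ω - T ω} := by
  set A := {ω | S ω - e ω * T ω + T ω < 0}
  set B := {ω | 0 < S ω - e ω * T ω - T ω}
  have hsign : {ω | Real.sign (S ω) = -e ω} =ᵐ[P]
      (A ∩ {ω | e ω = 1} ∪ B ∩ {ω | e ω = -1} : Set Ω) := by
    filter_upwards [ae_eq_one_or_eq_neg_one he he₁ he₂] with ω hω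
    change (ω ∈ {ω | Real.sign (S ω) = -e ω}) =
      (ω ∈ A ∩ {ω | e ω = 1} ∪ B ∩ {ω | e ω = -1})
    rcases hω with h | h <;>
      norm_num [A, B, h, Real.sign_eq_neg_one_iff, Real.sign_eq_one_iff]
  have hA₁ : P (A ∩ {ω | e ω = 1}) = P A * (1 / 2) := by
    rw [← he₁]
    exact hind.measure_inter_preimage_eq_mul {p | p.1 + p.2 < 0} {1}
      (measurableSet_lt (by fun_prop) (by fun_prop)) (measurableSet_singleton 1)
  have hB₂ : P (B ∩ {ω | e ω = -1}) = P B * (1 / 2) := by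
    rw [← he₂]
    exact hind.measure_inter_preimage_eq_mul {p | 0 < p.1 - p.2} {-1}
      (measurableSet_lt (by fun_prop) (by fun_prop)) (measurableSet_singleton (-1))
  have hdisj : Disjoint (A ∩ {ω | e ω = 1}) (B ∩ {ω | e ω = -1}) :=
    Set.disjoint_left.mpr fun ω ⟨_, (h₁ : e ω = 1)⟩ ⟨_, (h₂ : e ω = -1)⟩ => by
      linarith
  have hB : MeasurableSet (B ∩ {ω | e ω = -1}) :=
    (measurableSet_lt measurable_const ((hS.sub (he.mul hTm)).sub hTm)).inter
      (he (measurableSet_singleton (-1)))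
  rw [measure_congr hsign, measure_union hdisj hB, hA₁, hB₂, ← add_mul, mul_comm, mul_assoc,
    one_div, ENNReal.inv_mul_cancel two_ne_zero ENNReal.ofNat_ne_top, mul_one]

theorem measure_abs_sub_mul_le_eq_one_sub_two_mul [IsProbabilityMeasure P]
    (hS : Measurable S) (hTm : Measurable T) (he : Measurable e) (hT : ∀ ω, 0 ≤ T ω)
    (he₁ : P {ω | e ω = 1} = 1 / 2) (he₂ : P {ω | e ω = -1} = 1 / 2)
    (hind : IndepFun (fun ω => (S ω - e ω * T ω, T ω)) e P) :
    P {ω | |S ω - e ω * T ω| ≤ T ω} = 1 - 2 * P {ω | Real.sign (S ω) = -e ω} := by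
  set X := fun ω => S ω - e ω * T ω
  have hXm : Measurable X := hS.sub (he.mul hTm)
  have hdisj : Disjoint {ω | X ω + T ω < 0} {ω | 0 < X ω - T ω} :=
    Set.disjoint_left.mpr fun ω (h₁ : X ω + T ω < 0) (h₂ : 0 < X ω - T ω) => by
      linarith [hT ω]
  have hcompl : {ω | |X ω| ≤ T ω}ᶜ = {ω | X ω + T ω < 0} ∪ {ω | 0 < X ω - T ω} := by
    ext ω
    simp only [Set.mem_compl_iff, Set.mem_ofPred_eq, Set.mem_union, not_le, lt_abs]
    constructor <;> rintro (h | h) <;> [right; left; right; left] <;> linarith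
  rw [two_mul_measure_sign_eq_neg hS hTm he he₁ he₂ hind,
    ← measure_union hdisj (measurableSet_lt measurable_const (hXm.sub hTm)), ← hcompl,
    prob_compl_eq_one_sub (measurableSet_le hXm.abs hTm),
    ENNReal.sub_sub_cancel ENNReal.one_ne_top prob_le_one]

theorem indepFun_sum_sub_mul_prodMk {n : ℕ} {Y ε : Fin n → Ω → ℝ}
    (hYm : ∀ i, Measurable (Y i)) (hεm : ∀ i, Measurable (ε i))
    (hindep : iIndepFun (Sum.elim Y ε : Fin n ⊕ Fin n → Ω → ℝ) P) (L : Fin n) :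
    IndepFun (fun ω => (∑ i, ε i ω * Y i ω - ε L ω * Y L ω, Y L ω)) (ε L) P := by
  refine hindep.indepFun_of_measurable_iSup_compl (fun i => i.rec hYm hεm) (k := Sum.inr L) ?_
  have hcoord : ∀ i ≠ Sum.inr L, Measurable[⨆ j ∈ ({Sum.inr L}ᶜ : Set (Fin n ⊕ Fin n)),
      MeasurableSpace.comap (Sum.elim Y ε j) inferInstance] (Sum.elim Y ε i) :=
    fun i hi => measurable_iff_comap_le.mpr
      (le_iSup₂ (f := fun j (_ : j ∈ ({Sum.inr L}ᶜ : Set _)) =>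
        MeasurableSpace.comap (Sum.elim Y ε j) inferInstance) i hi)
  simp_rw [← Finset.sum_erase_eq_sub (Finset.mem_univ L)]
  refine Measurable.prodMk (Finset.measurable_sum _ fun i hi => ?_) (hcoord (Sum.inl L) (by simp))
  exact (hcoord (Sum.inr i) (by simpa using Finset.ne_of_mem_erase hi)).mul
    (hcoord (Sum.inl i) (by simp))

end

theorem stmt_10_general {Ω : Type*} [MeasurableSpace Ω] (P : Measure Ω) [IsProbabilityMeasure P]
    (n : ℕ) (Y ε : Fin n → Ω → ℝ)
    (hYm : ∀ i, Measurable (Y i)) (hεm : ∀ i, Measurable (ε i))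
    (hYpos : ∀ i ω, 0 ≤ Y i ω)
    (hε : ∀ i, P {ω | ε i ω = 1} = 1/2 ∧ P {ω | ε i ω = -1} = 1/2)
    (hindep : iIndepFun (Sum.elim Y ε : Fin n ⊕ Fin n → Ω → ℝ) P)
    (L : Fin n) :
    P {ω | Real.sign (∑ i, ε i ω * Y i ω) ≠
           Real.sign (∑ i, ε i ω * Y i ω - ε L ω * Y L ω)} ≤
      P {ω | |∑ i, ε i ω * Y i ω - ε L ω * Y L ω| ≤ Y L ω} ∧
    P {ω | |∑ i, ε i ω * Y i ω - ε L ω * Y L ω| ≤ Y L ω} =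
      1 - 2 * P {ω | Real.sign (∑ i, ε i ω * Y i ω) = -(ε L ω)} := by
  have hS : Measurable fun ω => ∑ i, ε i ω * Y i ω :=
    Finset.measurable_sum _ fun i _ => (hεm i).mul (hYm i)
  have hind := indepFun_sum_sub_mul_prodMk hYm hεm hindep L
  have hεL := ae_eq_one_or_eq_neg_one (hεm L) (hε L).1 (hε L).2
  refine ⟨measure_sign_ne_sign_sub_mul_le (hYpos L) ?_,
    measure_abs_sub_mul_le_eq_one_sub_two_mul hS (hYm L) (hεm L) (hYpos L) (hε L).1 (hε L).2
      hind⟩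
  filter_upwards [hεL] with ω h
  rcases h with h | h <;> simp [h]

theorem stmt_10 {Ω : Type*} [MeasurableSpace Ω] (P : Measure Ω) [IsProbabilityMeasure P]
    (n : ℕ) (hn : 0 < n) (Y ε : Fin n → Ω → ℝ)
    (hYm : ∀ i, Measurable (Y i)) (hεm : ∀ i, Measurable (ε i))
    (hYpos : ∀ i ω, 0 ≤ Y i ω)
    (hYid : ∀ i j, IdentDistrib (Y i) (Y j) P P)
    (hε : ∀ i, P {ω | ε i ω = 1} = 1/2 ∧ P {ω | ε i ω = -1} = 1/2)
    (hindep : iIndepFun (Sum.elim Y ε : Fin n ⊕ Fin n → Ω → ℝ) P)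
    (L : Fin n) (hL : (L : ℕ) = n - 1) :
    P {ω | Real.sign (∑ i, ε i ω * Y i ω) ≠
           Real.sign (∑ i, ε i ω * Y i ω - ε L ω * Y L ω)} ≤
      P {ω | |∑ i, ε i ω * Y i ω - ε L ω * Y L ω| ≤ Y L ω} ∧
    P {ω | |∑ i, ε i ω * Y i ω - ε L ω * Y L ω| ≤ Y L ω} =
      1 - 2 * P {ω | Real.sign (∑ i, ε i ω * Y i ω) = -(ε L ω)} :=
  stmt_10_general P n Y ε hYm hεm hYpos hε hindep L
end

section
/- For every γ < 2 there exist independent identically distributed real random variables X, Y with P(|X+Y| ≤ 1.5) > γ·P(|X−Y| ≤ 1.5). Concretely, for X, Y uniform on {−2n+1, −2n+3, …, −1, 2, 4, …, 2n}, one has P(|X−Y| ≤ 1.5) = 1/(2n) and P(|X+Y| ≤ 1.5) ≥ (1/n)(1 − 1/n). -/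
open MeasureTheory Finset
open scoped ENNReal

/-! Distinct points of the set differ by at least `2`, so `|X - Y| ≤ 1.5` forces `X = Y`, an event
of probability `1/(2n)`. On the other hand `x ↦ 1 - x` maps the set onto itself and `x ↦ -1 - x`
maps it into itself except at `-1` and `2n`, so at least `4n - 2` of the `4n²` pairs have sum `±1`.
Hence `P(|X + Y| ≤ 1.5) ≥ (4n - 2)/(4n²) ≥ (1/n)(1 - 1/n)`, and the ratio of the two probabilities,
at least `2(1 - 1/n)`, exceeds any `γ < 2` once `n` is large. -/

section SumDirac

variable {α : Type*} [MeasurableSpace α] [MeasurableSingletonClass α] (c : ℝ≥0∞) (s : Finset α)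

lemma lintegral_smul_sum_dirac (f : α → ℝ≥0∞) :
    ∫⁻ x, f x ∂(c • ∑ x ∈ s, Measure.dirac x) = c * ∑ x ∈ s, f x := by
  simp [lintegral_finsetSum_measure]

lemma smul_sum_dirac_apply (A : Set α) [DecidablePred (· ∈ A)] :
    (c • ∑ x ∈ s, Measure.dirac x) A = c * #{x ∈ s | x ∈ A} := by
  simp [Measure.finsetSum_apply, Set.indicator_apply, Finset.sum_boole]

lemma smul_sum_dirac_prod_apply {S : Set (α × α)} (hS : MeasurableSet S)
    [DecidablePred (· ∈ S)] :
    ((c • ∑ x ∈ s, Measure.dirac x).prod (c • ∑ x ∈ s, Measure.dirac x)) S =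
      c * c * #{p ∈ s ×ˢ s | p ∈ S} := by
  classical
  simp_rw [Measure.prod_apply hS, lintegral_smul_sum_dirac, smul_sum_dirac_apply, ← mul_sum,
    ← mul_assoc, ← sum_boole, sum_product]
  simp [Set.mem_preimage]

lemma isProbabilityMeasure_inv_card_smul_sum_dirac (hs : s.Nonempty) :
    IsProbabilityMeasure ((#s : ℝ≥0∞)⁻¹ • ∑ x ∈ s, Measure.dirac x) := by
  classical
  constructor
  rw [smul_sum_dirac_apply, filter_true_of_mem fun _ _ => Set.mem_univ _]
  exact ENNReal.inv_mul_cancel (by simpa using hs.ne_empty) (ENNReal.natCast_ne_top _)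

end SumDirac

lemma filter_abs_sub_le_eq_diag {s : Finset ℝ} {c : ℝ} (hc : 0 ≤ c)
    (hs : ∀ x ∈ s, ∀ y ∈ s, |x - y| ≤ c → x = y) :
    {p ∈ s ×ˢ s | |p.1 - p.2| ≤ c} = s.diag := by
  ext ⟨x, y⟩
  simp only [mem_filter, mem_product, mem_diag]
  constructor
  · rintro ⟨⟨hx, hy⟩, hxy⟩
    exact ⟨hx, hs x hx y hy hxy⟩
  · rintro ⟨hx, rfl⟩
    simpa using ⟨hx, hc⟩

lemma card_add_card_le_card_filter_abs_add_le (s : Finset ℝ) {a b c : ℝ} (ha : |a| ≤ c)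
    (hb : |b| ≤ c) (hab : a ≠ b) :
    #{x ∈ s | a - x ∈ s} + #{x ∈ s | b - x ∈ s} ≤ #{p ∈ s ×ˢ s | |p.1 + p.2| ≤ c} := by
  have hinj : ∀ d : ℝ, Function.Injective fun x : ℝ => (x, d - x) :=
    fun d _ _ h => congrArg Prod.fst h
  have hdisj : Disjoint ({x ∈ s | a - x ∈ s}.image fun x => (x, a - x))
      ({x ∈ s | b - x ∈ s}.image fun x => (x, b - x)) := by
    simp only [disjoint_left, mem_image, not_exists, not_and]
    rintro _ ⟨x, -, rfl⟩ y - h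
    simp only [Prod.mk.injEq] at h
    exact hab (by linarith [h.1, h.2])
  rw [← card_image_of_injective _ (hinj a), ← card_image_of_injective _ (hinj b),
    ← card_union_of_disjoint hdisj]
  refine card_le_card fun p hp => ?_
  simp only [mem_union, mem_image, mem_filter] at hp
  rcases hp with ⟨x, ⟨hx, hax⟩, rfl⟩ | ⟨x, ⟨hx, hbx⟩, rfl⟩
  · simpa [hx, hax] using ha
  · simpa [hx, hbx] using hb

noncomputable def negOddsPosEvens (n : ℕ) : Finset ℝ :=
  ((range n).image fun k : ℕ => -(2 * (k : ℝ) + 1)) ∪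
    ((range n).image fun k : ℕ => 2 * ((k : ℝ) + 1))

lemma mem_negOddsPosEvens {n : ℕ} {x : ℝ} :
    x ∈ negOddsPosEvens n ↔
      (∃ k < n, -(2 * (k : ℝ) + 1) = x) ∨ ∃ k < n, 2 * ((k : ℝ) + 1) = x := by
  simp [negOddsPosEvens]

lemma card_negOddsPosEvens (n : ℕ) : #(negOddsPosEvens n) = 2 * n := by
  have hdisj : Disjoint ((range n).image fun k : ℕ => -(2 * (k : ℝ) + 1))
      ((range n).image fun k : ℕ => 2 * ((k : ℝ) + 1)) := by
    simp only [disjoint_left, mem_image, not_exists, not_and]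
    rintro _ ⟨k, -, rfl⟩ j - h
    linarith [k.cast_nonneg (α := ℝ), j.cast_nonneg (α := ℝ)]
  rw [negOddsPosEvens, card_union_of_disjoint hdisj,
    card_image_of_injective _ fun k j h => by simpa using h,
    card_image_of_injective _ fun k j h => by simpa using h, card_range, two_mul]

lemma Nat.eq_of_cast_lt_add_one {R : Type*} [Semiring R] [LinearOrder R] [IsStrictOrderedRing R]
    {k j : ℕ} (h₁ : (k : R) < j + 1) (h₂ : (j : R) < k + 1) : k = j := by
  have : k < j + 1 := by exact_mod_cast h₁
  have : j < k + 1 := by exact_mod_cast h₂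
  omega

lemma eq_of_abs_sub_lt_two {n : ℕ} {x y : ℝ} (hx : x ∈ negOddsPosEvens n)
    (hy : y ∈ negOddsPosEvens n) (hxy : |x - y| < 2) : x = y := by
  rw [abs_lt] at hxy
  rcases mem_negOddsPosEvens.1 hx with ⟨k, -, rfl⟩ | ⟨k, -, rfl⟩ <;>
    rcases mem_negOddsPosEvens.1 hy with ⟨j, -, rfl⟩ | ⟨j, -, rfl⟩
  · rw [Nat.eq_of_cast_lt_add_one (R := ℝ) (k := k) (j := j) (by linarith) (by linarith)]
  · linarith [k.cast_nonneg (α := ℝ), j.cast_nonneg (α := ℝ)]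
  · linarith [k.cast_nonneg (α := ℝ), j.cast_nonneg (α := ℝ)]
  · rw [Nat.eq_of_cast_lt_add_one (R := ℝ) (k := k) (j := j) (by linarith) (by linarith)]

lemma one_sub_mem_negOddsPosEvens {n : ℕ} {x : ℝ} (hx : x ∈ negOddsPosEvens n) :
    1 - x ∈ negOddsPosEvens n := by
  rw [mem_negOddsPosEvens] at hx ⊢
  rcases hx with ⟨k, hk, rfl⟩ | ⟨k, hk, rfl⟩
  · exact Or.inr ⟨k, hk, by ring⟩
  · exact Or.inl ⟨k, hk, by ring⟩

lemma neg_one_sub_mem_negOddsPosEvens {n : ℕ} {x : ℝ} (hx : x ∈ negOddsPosEvens n)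
    (hx₁ : x ≠ -1) (hx₂ : x ≠ 2 * n) : -1 - x ∈ negOddsPosEvens n := by
  rw [mem_negOddsPosEvens] at hx ⊢
  rcases hx with ⟨_ | k, hk, rfl⟩ | ⟨k, hk, rfl⟩
  · simp at hx₁
  · exact Or.inr ⟨k, by omega, by push_cast; ring⟩
  · have : k + 1 ≠ n := by rintro rfl; push_cast at hx₂; exact hx₂ rfl
    exact Or.inl ⟨k + 1, by omega, by push_cast; ring⟩

lemma two_mul_le_card_filter_neg_one_sub_mem (n : ℕ) :
    2 * n ≤ #{x ∈ negOddsPosEvens n | -1 - x ∈ negOddsPosEvens n} + 2 := by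
  have hcard := card_negOddsPosEvens n
  set s := negOddsPosEvens n
  have hsub : (s.erase (-1)).erase (2 * n) ⊆ {x ∈ s | -1 - x ∈ s} := fun x hx => by
    obtain ⟨hx₂, hx₁, hx⟩ := by simpa only [mem_erase] using hx
    exact mem_filter.2 ⟨hx, neg_one_sub_mem_negOddsPosEvens hx hx₁ hx₂⟩
  have h₁ := pred_card_le_card_erase (s := s) (a := -1)
  have h₂ := pred_card_le_card_erase (s := s.erase (-1)) (a := 2 * n)
  have := card_le_card hsub
  omega

lemma card_filter_abs_add_le_negOddsPosEvens (n : ℕ) :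
    4 * n ≤ #{p ∈ negOddsPosEvens n ×ˢ negOddsPosEvens n | |p.1 + p.2| ≤ 1.5} + 2 := by
  have hsum := card_add_card_le_card_filter_abs_add_le (negOddsPosEvens n)
    (a := 1) (b := -1) (c := 1.5) (by norm_num [abs_of_pos]) (by norm_num) (by norm_num)
  rw [filter_true_of_mem fun _ => one_sub_mem_negOddsPosEvens, card_negOddsPosEvens] at hsum
  have := two_mul_le_card_filter_neg_one_sub_mem n
  omega

lemma prod_abs_sub_le_negOddsPosEvens {n : ℕ} (hn : n ≠ 0) {μ : Measure ℝ}
    (hμ : μ = (#(negOddsPosEvens n) : ℝ≥0∞)⁻¹ • ∑ x ∈ negOddsPosEvens n, Measure.dirac x) :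
    (μ.prod μ) {p : ℝ × ℝ | |p.1 - p.2| ≤ 1.5} = (2 * (n : ℝ≥0∞))⁻¹ := by
  rw [hμ, smul_sum_dirac_prod_apply _ _ (measurableSet_le (by fun_prop) measurable_const)]
  simp only [Set.mem_ofPred_eq]
  rw [filter_abs_sub_le_eq_diag (by norm_num)
      fun x hx y hy h => eq_of_abs_sub_lt_two hx hy (by linarith),
    diag_card, card_negOddsPosEvens]
  push_cast
  rw [mul_assoc, ENNReal.inv_mul_cancel (by simp [hn]) (by simp [ENNReal.mul_eq_top]), mul_one]

lemma ofReal_le_prod_abs_add_le_negOddsPosEvens {n : ℕ} (hn : n ≠ 0) {μ : Measure ℝ}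
    (hμ : μ = (#(negOddsPosEvens n) : ℝ≥0∞)⁻¹ • ∑ x ∈ negOddsPosEvens n, Measure.dirac x) :
    ENNReal.ofReal (1 / n * (1 - 1 / n)) ≤ (μ.prod μ) {p : ℝ × ℝ | |p.1 + p.2| ≤ 1.5} := by
  rw [hμ, smul_sum_dirac_prod_apply _ _ (measurableSet_le (by fun_prop) measurable_const),
    card_negOddsPosEvens, ENNReal.ofReal_le_iff_le_toReal
      (ENNReal.mul_ne_top (ENNReal.mul_ne_top (by simp [hn]) (by simp [hn])) (by simp))]
  simp only [Set.mem_ofPred_eq]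
  have hcard : (4 * n : ℝ) ≤
      #{p ∈ negOddsPosEvens n ×ˢ negOddsPosEvens n | |p.1 + p.2| ≤ 1.5} + 2 := by
    exact_mod_cast card_filter_abs_add_le_negOddsPosEvens n
  have hn' : (0 : ℝ) < n := by positivity
  simp only [ENNReal.toReal_mul, ENNReal.toReal_inv, ENNReal.toReal_natCast]
  push_cast
  rw [show 1 / (n : ℝ) * (1 - 1 / n) = (2 * (n : ℝ))⁻¹ * (2 * (n : ℝ))⁻¹ * (4 * n - 4) by
    field_simp; ring]
  gcongr
  linarith

lemma ofReal_mul_inv_two_mul_lt {γ : ℝ} {n : ℕ} (hn : 2 ≤ n) (hγn : 2 < (2 - γ) * n) :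
    ENNReal.ofReal γ * (2 * (n : ℝ≥0∞))⁻¹ < ENNReal.ofReal (1 / n * (1 - 1 / n)) := by
  have hn' : (2 : ℝ) ≤ n := by exact_mod_cast hn
  have h2n : (2 * (n : ℝ≥0∞))⁻¹ = ENNReal.ofReal (2 * n)⁻¹ := by
    rw [ENNReal.ofReal_inv_of_pos (by positivity), ENNReal.ofReal_mul zero_le_two]
    simp
  rw [h2n, ← ENNReal.ofReal_mul' (by positivity), ENNReal.ofReal_lt_ofReal_iff]
  · rw [← sub_pos, show 1 / (n : ℝ) * (1 - 1 / n) - γ * (2 * (n : ℝ))⁻¹ =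
        ((2 - γ) * n - 2) / (2 * n ^ 2) by field_simp; ring]
    exact div_pos (by linarith) (by positivity)
  · have : 1 / (n : ℝ) ≤ 1 / 2 := by gcongr
    exact mul_pos (by positivity) (by linarith)

theorem stmt_15 (γ : ℝ) (hγ : γ < 2) :
    (∃ μ : Measure ℝ, IsProbabilityMeasure μ ∧
      ENNReal.ofReal γ * (μ.prod μ) {p : ℝ × ℝ | |p.1 - p.2| ≤ 1.5} <
        (μ.prod μ) {p : ℝ × ℝ | |p.1 + p.2| ≤ 1.5}) ∧
    ∀ n : ℕ, 2 ≤ n →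
      ∀ s : Finset ℝ,
        s = ((range n).image fun k : ℕ => -(2 * (k : ℝ) + 1)) ∪
            ((range n).image fun k : ℕ => 2 * ((k : ℝ) + 1)) →
      ∀ μ : Measure ℝ,
        μ = (s.card : ENNReal)⁻¹ • ∑ x ∈ s, Measure.dirac x →
        (μ.prod μ) {p : ℝ × ℝ | |p.1 - p.2| ≤ 1.5} = (2 * (n : ENNReal))⁻¹ ∧
        ENNReal.ofReal ((1 / n) * (1 - 1 / n)) ≤
          (μ.prod μ) {p : ℝ × ℝ | |p.1 + p.2| ≤ 1.5} := by
  refine ⟨?_, fun n hn s hs μ hμ => ?_⟩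
  · obtain ⟨m, hm⟩ := exists_nat_gt (2 / (2 - γ))
    have hn : 2 ≤ m + 2 := by omega
    have hγn : 2 < (2 - γ) * (m + 2 : ℕ) := by
      rw [div_lt_iff₀' (by linarith)] at hm
      push_cast
      nlinarith
    refine ⟨_, isProbabilityMeasure_inv_card_smul_sum_dirac (negOddsPosEvens (m + 2)) ?_, ?_⟩
    · rw [← card_pos, card_negOddsPosEvens]; omega
    rw [prod_abs_sub_le_negOddsPosEvens (by omega) rfl]
    exact (ofReal_mul_inv_two_mul_lt hn hγn).trans_le
      (ofReal_le_prod_abs_add_le_negOddsPosEvens (by omega) rfl)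
  · subst hs
    exact ⟨prod_abs_sub_le_negOddsPosEvens (by omega) hμ,
      ofReal_le_prod_abs_add_le_negOddsPosEvens (by omega) hμ⟩
end

section
/- Let Y₁, …, Yₙ be positive reals, not all zero, and ε₁, …, εₙ ∈ {−1, +1}. For j = 1, …, n+1 define S⁽ʲ⁾ = Σ_{i<j}(−εᵢ)Yᵢ + Σ_{i≥j} εᵢYᵢ. Then S⁽¹⁾ = −S⁽ⁿ⁺¹⁾, and if S⁽¹⁾ ≠ 0 there exists an index j₀ ∈ {1, …, n} such that sgn(S⁽ʲ⁰⁾) ≠ sgn(S⁽ʲ⁰⁾ − εⱼ₀Yⱼ₀) or sgn(S⁽ʲ⁰⁺¹⁾) ≠ sgn(S⁽ʲ⁰⁺¹⁾ + εⱼ₀Yⱼ₀). -/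
theorem stmt_16 (n : ℕ) (Y ε : Fin n → ℝ)
    (hY : ∀ i, 0 ≤ Y i) (hne : ∃ i, 0 < Y i)
    (hε : ∀ i, ε i = 1 ∨ ε i = -1)
    (S : ℕ → ℝ)
    (hS : ∀ j, S j = ∑ i : Fin n, (if (i : ℕ) < j then -(ε i) else ε i) * Y i) :
    S 0 = -(S n) ∧
    (S 0 ≠ 0 → ∃ j : Fin n,
      Real.sign (S (j : ℕ)) ≠ Real.sign (S (j : ℕ) - ε j * Y j) ∨
      Real.sign (S ((j : ℕ) + 1)) ≠ Real.sign (S ((j : ℕ) + 1) + ε j * Y j)) := by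
  have h0 : S 0 = ∑ i : Fin n, ε i * Y i := by
    rw [hS]; exact Finset.sum_congr rfl (by intro i _; simp)
  have hn : S n = -(S 0) := by
    rw [hS, h0, ← Finset.sum_neg_distrib]
    refine Finset.sum_congr rfl ?_
    intro i _
    simp [i.isLt]
  refine ⟨by linarith, ?_⟩
  intro hne0
  have key : ∀ j : Fin n, S ((j : ℕ) + 1) = S (j : ℕ) - 2 * ε j * Y j := by
    intro j
    have hd : S (j : ℕ) - S ((j : ℕ) + 1) = 2 * ε j * Y j := by
      rw [hS, hS, ← Finset.sum_sub_distrib, Finset.sum_eq_single j]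
      · have h1 : ¬ ((j : ℕ) < (j : ℕ)) := lt_irrefl _
        have h2 : (j : ℕ) < (j : ℕ) + 1 := Nat.lt_succ_self _
        simp [h1, h2]; ring
      · intro i _ hij
        have hne' : (i : ℕ) ≠ (j : ℕ) := fun h => hij (Fin.ext h)
        rcases lt_or_gt_of_ne hne' with h | h
        · simp [h, Nat.lt_succ_of_lt h]
        · have h1 : ¬ ((i : ℕ) < (j : ℕ)) := by omega
          have h2 : ¬ ((i : ℕ) < (j : ℕ) + 1) := by omega
          simp [h1, h2]
      · simp
    linarith
  by_contra hc
  push_neg at hc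
  have hadj : ∀ j : Fin n, Real.sign (S (j : ℕ)) = Real.sign (S ((j : ℕ) + 1)) := by
    intro j
    obtain ⟨h1, h2⟩ := hc j
    have hm : S (j : ℕ) - ε j * Y j = S ((j : ℕ) + 1) + ε j * Y j := by
      rw [key j]; ring
    rw [h1, hm, ← h2]
  have hall : ∀ k, k ≤ n → Real.sign (S k) = Real.sign (S 0) := by
    intro k
    induction k with
    | zero => intro _; rfl
    | succ m ih =>
      intro hm
      have hmn : m < n := hm
      have := hadj ⟨m, hmn⟩
      simp only [Fin.val_mk] at this
      rw [← this, ih (le_of_lt hmn)]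
  have hfin : Real.sign (S n) = Real.sign (S 0) := hall n le_rfl
  rw [hn, Real.sign_neg] at hfin
  have : Real.sign (S 0) = 0 := by linarith
  exact hne0 (Real.sign_eq_zero_iff.mp this)
end

section
/- Let p be a probability distribution on ℕ with p_k = c·k^{−3/2} (c the normalizing constant), and let Aₙ be the event that among n independent samples from p the largest value is attained at least twice. Then P(Aₙ) = o(1/n) as n → ∞. -/
/-!
Fix a threshold `K` of order `n ^ (7/4)`. If the maximum of `Z₀, …, Zₙ₋₁` is attained twice, then
either all samples are at most `K`, or two distinct samples coincide above `K`. Since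
`P(Z > K) ≥ ∑_{K < k ≤ 2K} c k^(-3/2) ≥ c 2^(-3/2) K^(-1/2)`, independence bounds the first event
by `(1 - P(Z > K))ⁿ ≤ exp (-c 2^(-3/2) n K^(-1/2)) ≤ exp (-(c/4) n^(1/8))`. The second has
probability at most `n² ∑_{k > K} c² k⁻³ ≤ n² c² / K² ≤ c² n^(-3/2)`. Both are `o(1/n)`.
-/

open MeasureTheory ProbabilityTheory Filter Finset

lemma rpow_neg_three_halves_mul_self {x : ℝ} (hx : 0 < x) :
    x ^ (-(3 : ℝ) / 2) * x ^ (-(3 : ℝ) / 2) = (x ^ 3)⁻¹ := by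
  rw [← Real.rpow_add hx, ← Real.rpow_natCast, ← Real.rpow_neg hx.le]
  norm_num

lemma sum_range_inv_cube_le {K : ℝ} (hK : 0 < K) (N : ℕ) :
    ∑ k ∈ range N, ((K + k + 1) ^ 3)⁻¹ ≤ (K ^ 2)⁻¹ := by
  have hterm (k : ℕ) : ((K + k + 1) ^ 3)⁻¹ ≤ K⁻¹ * ((K + k)⁻¹ - (K + (k + 1 : ℕ))⁻¹) := by
    have hk : (0 : ℝ) ≤ k := k.cast_nonneg
    have htelescope :
        K⁻¹ * ((K + k)⁻¹ - (K + (k + 1 : ℕ))⁻¹) = (K * (K + k) * (K + k + 1))⁻¹ := by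
      push_cast
      field_simp
      ring
    rw [htelescope]
    gcongr
    calc K * (K + k) * (K + k + 1) ≤ (K + k + 1) ^ 2 * (K + k + 1) := by gcongr; nlinarith
      _ = (K + k + 1) ^ 3 := by ring
  calc ∑ k ∈ range N, ((K + k + 1) ^ 3)⁻¹
      ≤ ∑ k ∈ range N, K⁻¹ * ((K + k)⁻¹ - (K + (k + 1 : ℕ))⁻¹) := sum_le_sum fun k _ => hterm k
    _ = K⁻¹ * (K⁻¹ - (K + N)⁻¹) := by
      rw [← mul_sum, sum_range_sub' (fun k : ℕ => (K + k)⁻¹)]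
      simp
    _ ≤ (K ^ 2)⁻¹ := by
      rw [sq, mul_inv]
      gcongr
      exact sub_le_self _ (by positivity)

lemma exists_nat_between_self_two_mul {y : ℝ} (hy : 1 ≤ y) :
    ∃ K : ℕ, y ≤ K ∧ (K : ℝ) ≤ 2 * y :=
  ⟨⌈y⌉₊, Nat.le_ceil y, by linarith [Nat.ceil_lt_add_one (by linarith : 0 ≤ y)]⟩

lemma rpow_eighth_le_of_le_two_mul {x K : ℝ} (hx : 0 < x) (hK0 : 0 < K)
    (hK : K ≤ 2 * x ^ (7 / 4 : ℝ)) :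
    4⁻¹ * x ^ (8⁻¹ : ℝ) ≤ x * (2 ^ (-(3 : ℝ) / 2) * K ^ (-(1 : ℝ) / 2)) := by
  have htwo : (2 : ℝ) ^ (-(3 : ℝ) / 2) * 2 ^ (-(1 : ℝ) / 2) = 4⁻¹ := by
    rw [← Real.rpow_add two_pos]
    norm_num
  have hxpow : x * x ^ (7 / 4 * (-(1 : ℝ) / 2)) = x ^ (8⁻¹ : ℝ) := by
    rw [← Real.rpow_one_add' hx.le (by norm_num)]
    norm_num
  calc 4⁻¹ * x ^ (8⁻¹ : ℝ)
      = x * (2 ^ (-(3 : ℝ) / 2) * (2 * x ^ (7 / 4 : ℝ)) ^ (-(1 : ℝ) / 2)) := by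
        rw [Real.mul_rpow zero_le_two (by positivity), ← Real.rpow_mul hx.le, ← htwo, ← hxpow]
        ring
    _ ≤ x * (2 ^ (-(3 : ℝ) / 2) * K ^ (-(1 : ℝ) / 2)) := by
        gcongr _ * (_ * ?_)
        exact Real.rpow_le_rpow_of_nonpos hK0 hK (by norm_num)

lemma cube_div_sq_le_rpow {x K : ℝ} (hx : 0 < x) (hK : x ^ (7 / 4 : ℝ) ≤ K) :
    x ^ 3 / K ^ 2 ≤ x ^ (-(2⁻¹ : ℝ)) := by
  calc x ^ 3 / K ^ 2 ≤ x ^ 3 / (x ^ (7 / 4 : ℝ)) ^ 2 := by gcongr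
    _ = x ^ (-(2⁻¹ : ℝ)) := by
        rw [← Real.rpow_natCast, ← Real.rpow_natCast, ← Real.rpow_mul hx.le,
          ← Real.rpow_sub hx]
        norm_num

lemma tendsto_mul_exp_neg_rpow_add_rpow (a d : ℝ) (ha : 0 < a) :
    Tendsto (fun n : ℕ => (n : ℝ) * Real.exp (-(a * (n : ℝ) ^ (8⁻¹ : ℝ)))
      + d * (n : ℝ) ^ (-(2⁻¹ : ℝ))) atTop (nhds 0) := by
  have hexp : Tendsto (fun x : ℝ => x * Real.exp (-(a * x ^ (8⁻¹ : ℝ)))) atTop (nhds 0) := by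
    refine ((tendsto_rpow_mul_exp_neg_mul_atTop_nhds_zero 8 a ha).comp
      (tendsto_rpow_atTop (by norm_num : (0 : ℝ) < 8⁻¹))).congr' ?_
    filter_upwards [eventually_ge_atTop 0] with x hx
    simp only [Function.comp_apply, Real.rpow_inv_rpow hx (by norm_num : (8 : ℝ) ≠ 0), neg_mul]
  have hpow : Tendsto (fun x : ℝ => d * x ^ (-(2⁻¹ : ℝ))) atTop (nhds 0) := by
    simpa using (tendsto_rpow_neg_atTop (by norm_num : (0 : ℝ) < 2⁻¹)).const_mul d
  have hsum := (hexp.add hpow).comp tendsto_natCast_atTop_atTop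
  rwa [add_zero] at hsum

def HasThreeHalvesPowerLaw {Ω : Type*} [MeasurableSpace Ω] (P : Measure Ω) (X : Ω → ℕ)
    (c : ℝ) : Prop :=
  ∀ k : ℕ, 1 ≤ k → P (X ⁻¹' {k}) = ENNReal.ofReal (c * (k : ℝ) ^ (-(3 : ℝ) / 2))

namespace HasThreeHalvesPowerLaw

variable {Ω : Type*} [MeasurableSpace Ω] {P : Measure Ω} {X Y : Ω → ℕ} {c : ℝ}

lemma const_pos [NeZero P] (hX : HasThreeHalvesPowerLaw P X c) (h0 : P (X ⁻¹' {0}) = 0) :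
    0 < c := by
  by_contra! hc
  have hnull (k : ℕ) : P (X ⁻¹' {k}) = 0 := by
    rcases k with _ | k
    · exact h0
    · rw [hX _ (by omega), ENNReal.ofReal_eq_zero]
      exact mul_nonpos_of_nonpos_of_nonneg hc (by positivity)
  have huniv : (⋃ k, X ⁻¹' {k}) = Set.univ :=
    Set.eq_univ_of_forall fun ω => ⟨_, ⟨X ω, rfl⟩, rfl⟩
  exact NeZero.ne P (by simpa [huniv] using measure_iUnion_null hnull)

lemma measureReal_eq (hX : HasThreeHalvesPowerLaw P X c) (hc : 0 ≤ c) {k : ℕ} (hk : 1 ≤ k) :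
    P.real (X ⁻¹' {k}) = c * (k : ℝ) ^ (-(3 : ℝ) / 2) := by
  rw [measureReal_def, hX k hk, ENNReal.toReal_ofReal (by positivity)]

lemma le_measureReal_gt [IsFiniteMeasure P] (hX : HasThreeHalvesPowerLaw P X c)
    (hXm : Measurable X) (hc : 0 ≤ c) {K : ℕ} (hK : 1 ≤ K) :
    c * 2 ^ (-(3 : ℝ) / 2) * (K : ℝ) ^ (-(1 : ℝ) / 2) ≤ P.real {ω | K < X ω} := by
  have hKpos : (0 : ℝ) < K := by exact_mod_cast hK
  calc c * 2 ^ (-(3 : ℝ) / 2) * (K : ℝ) ^ (-(1 : ℝ) / 2)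
      = ∑ _k ∈ Ioc K (2 * K), c * ((2 * K : ℕ) : ℝ) ^ (-(3 : ℝ) / 2) := by
        rw [sum_const, Nat.card_Ioc, show 2 * K - K = K by omega, nsmul_eq_mul, Nat.cast_mul,
          Nat.cast_ofNat, Real.mul_rpow zero_le_two hKpos.le,
          show (-(1 : ℝ) / 2) = 1 + -(3 : ℝ) / 2 by norm_num, Real.rpow_add hKpos, Real.rpow_one]
        ring
    _ ≤ ∑ k ∈ Ioc K (2 * K), P.real (X ⁻¹' {k}) := by
        refine sum_le_sum fun k hk => ?_
        obtain ⟨hKk, hk2K⟩ := mem_Ioc.1 hk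
        have hkpos : (0 : ℝ) < k := by exact_mod_cast (by omega : 0 < k)
        rw [hX.measureReal_eq hc (by omega)]
        exact mul_le_mul_of_nonneg_left
          (Real.rpow_le_rpow_of_nonpos hkpos (by exact_mod_cast hk2K) (by norm_num)) hc
    _ = P.real (X ⁻¹' (Ioc K (2 * K) : Set ℕ)) :=
        sum_measureReal_preimage_singleton _ fun k _ => hXm (measurableSet_singleton k)
    _ ≤ P.real {ω | K < X ω} :=
        measureReal_mono fun ω hω => show K < X ω from (mem_Ioc.1 (mem_coe.1 hω)).1

lemma measureReal_preimage_Iic_le [IsProbabilityMeasure P] (hX : HasThreeHalvesPowerLaw P X c)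
    (hXm : Measurable X) (hc : 0 ≤ c) {K : ℕ} (hK : 1 ≤ K) :
    P.real (X ⁻¹' Set.Iic K) ≤
      Real.exp (-(c * 2 ^ (-(3 : ℝ) / 2) * (K : ℝ) ^ (-(1 : ℝ) / 2))) := by
  have hcompl : (X ⁻¹' Set.Iic K)ᶜ = {ω | K < X ω} := by ext; simp
  calc P.real (X ⁻¹' Set.Iic K) = 1 - P.real {ω | K < X ω} := by
        rw [← hcompl, probReal_compl_eq_one_sub (hXm measurableSet_Iic), sub_sub_cancel]
    _ ≤ 1 - c * 2 ^ (-(3 : ℝ) / 2) * (K : ℝ) ^ (-(1 : ℝ) / 2) :=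
        sub_le_sub_left (hX.le_measureReal_gt hXm hc hK) 1
    _ ≤ _ := Real.one_sub_le_exp_neg _

lemma measureReal_eq_and_gt_le (hX : HasThreeHalvesPowerLaw P X c)
    (hY : HasThreeHalvesPowerLaw P Y c) (hXY : IndepFun X Y P) (hc : 0 ≤ c) {K : ℕ}
    (hK : 1 ≤ K) :
    P.real {ω | X ω = Y ω ∧ K < X ω} ≤ c ^ 2 / (K : ℝ) ^ 2 := by
  have hKpos : (0 : ℝ) < K := by exact_mod_cast hK
  set S : ℕ → Set Ω := fun k => X ⁻¹' {K + 1 + k} ∩ Y ⁻¹' {K + 1 + k}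
  have hsub : {ω | X ω = Y ω ∧ K < X ω} ⊆ ⋃ k, S k := by
    rintro ω ⟨hXYω, hKX⟩
    exact Set.mem_iUnion.2 ⟨X ω - (K + 1), by simp [S, ← hXYω]; omega⟩
  have hS (k : ℕ) : P (S k) = ENNReal.ofReal (c ^ 2 * (((K : ℝ) + k + 1) ^ 3)⁻¹) := by
    have hcast : ((K + 1 + k : ℕ) : ℝ) = K + k + 1 := by push_cast; ring
    rw [hXY.measure_inter_preimage_eq_mul _ _ (measurableSet_singleton _)
        (measurableSet_singleton _), hX _ (by omega), hY _ (by omega),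
      ← ENNReal.ofReal_mul (by positivity), hcast, ← rpow_neg_three_halves_mul_self (by positivity)]
    ring_nf
  refine ENNReal.toReal_le_of_le_ofReal (by positivity) ?_
  calc P {ω | X ω = Y ω ∧ K < X ω} ≤ ∑' k, P (S k) :=
        (measure_mono hsub).trans (measure_iUnion_le S)
    _ ≤ ENNReal.ofReal (c ^ 2 / (K : ℝ) ^ 2) := by
      refine ENNReal.tsum_le_of_sum_range_le fun N => ?_
      simp_rw [hS]
      rw [← ENNReal.ofReal_sum_of_nonneg fun k _ => by positivity, ← mul_sum, div_eq_mul_inv]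
      exact ENNReal.ofReal_le_ofReal
        (mul_le_mul_of_nonneg_left (sum_range_inv_cube_le hKpos N) (sq_nonneg c))

end HasThreeHalvesPowerLaw

def maxAttainedTwice {Ω : Type*} (Z : ℕ → Ω → ℕ) (n : ℕ) : Set Ω :=
  {ω | ∃ i < n, ∃ j < n, i ≠ j ∧ Z i ω = Z j ω ∧ ∀ m < n, Z m ω ≤ Z i ω}

lemma maxAttainedTwice_subset {Ω : Type*} (Z : ℕ → Ω → ℕ) (n K : ℕ) :
    maxAttainedTwice Z n ⊆ (⋂ i ∈ range n, Z i ⁻¹' Set.Iic K) ∪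
      ⋃ p ∈ (range n).offDiag, {ω | Z p.1 ω = Z p.2 ω ∧ K < Z p.1 ω} := by
  rintro ω ⟨i, hi, j, hj, hij, hZij, hmax⟩
  by_cases hle : Z i ω ≤ K
  · exact Or.inl (Set.mem_iInter₂.2 fun m hm => (hmax m (mem_range.1 hm)).trans hle)
  · refine Or.inr (Set.mem_biUnion (x := (i, j)) ?_ ⟨hZij, not_le.1 hle⟩)
    exact mem_offDiag.2 ⟨mem_range.2 hi, mem_range.2 hj, hij⟩

lemma measureReal_maxAttainedTwice_le {Ω : Type*} [MeasurableSpace Ω] {P : Measure Ω}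
    [IsProbabilityMeasure P] {Z : ℕ → Ω → ℕ} {c : ℝ} (hZm : ∀ i, Measurable (Z i))
    (hindep : iIndepFun Z P) (hlaw : ∀ i, HasThreeHalvesPowerLaw P (Z i) c) (hc : 0 ≤ c)
    {K : ℕ} (hK : 1 ≤ K) (n : ℕ) :
    P.real (maxAttainedTwice Z n) ≤
      Real.exp (-(n * (c * 2 ^ (-(3 : ℝ) / 2) * (K : ℝ) ^ (-(1 : ℝ) / 2))))
        + n ^ 2 * (c ^ 2 / (K : ℝ) ^ 2) := by
  have hall : P.real (⋂ i ∈ range n, Z i ⁻¹' Set.Iic K) ≤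
      Real.exp (-(n * (c * 2 ^ (-(3 : ℝ) / 2) * (K : ℝ) ^ (-(1 : ℝ) / 2)))) := by
    calc P.real (⋂ i ∈ range n, Z i ⁻¹' Set.Iic K)
        = ∏ i ∈ range n, P.real (Z i ⁻¹' Set.Iic K) := by
          rw [measureReal_def, hindep.measure_inter_preimage_eq_mul _ fun _ _ => measurableSet_Iic,
            ENNReal.toReal_prod]
          rfl
      _ ≤ ∏ _i ∈ range n, Real.exp (-(c * 2 ^ (-(3 : ℝ) / 2) * (K : ℝ) ^ (-(1 : ℝ) / 2))) :=
          prod_le_prod (fun _ _ => measureReal_nonneg)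
            fun i _ => (hlaw i).measureReal_preimage_Iic_le (hZm i) hc hK
      _ = _ := by rw [prod_const, card_range, ← Real.exp_nat_mul, mul_neg]
  have hpairs : P.real (⋃ p ∈ (range n).offDiag, {ω | Z p.1 ω = Z p.2 ω ∧ K < Z p.1 ω}) ≤
      n ^ 2 * (c ^ 2 / (K : ℝ) ^ 2) := by
    refine (measureReal_biUnion_finset_le _ _).trans ?_
    calc ∑ p ∈ (range n).offDiag, P.real {ω | Z p.1 ω = Z p.2 ω ∧ K < Z p.1 ω}
        ≤ ((range n).offDiag).card • (c ^ 2 / (K : ℝ) ^ 2) :=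
          sum_le_card_nsmul _ _ _ fun p hp => (hlaw p.1).measureReal_eq_and_gt_le (hlaw p.2)
            (hindep.indepFun (mem_offDiag.1 hp).2.2) hc hK
      _ ≤ n ^ 2 * (c ^ 2 / (K : ℝ) ^ 2) := by
          rw [nsmul_eq_mul, offDiag_card, card_range]
          gcongr
          exact_mod_cast (Nat.sub_le _ _).trans (sq n).ge
  exact (measureReal_mono (maxAttainedTwice_subset Z n K)).trans
    ((measureReal_union_le _ _).trans (add_le_add hall hpairs))

theorem stmt_18_general {Ω : Type*} [MeasurableSpace Ω] (P : Measure Ω) [IsProbabilityMeasure P]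
    (Z : ℕ → Ω → ℕ) (hZm : ∀ i, Measurable (Z i))
    (hindep : iIndepFun Z P)
    (c : ℝ)
    (hlaw : ∀ i, ∀ k : ℕ, 1 ≤ k →
      P {ω | Z i ω = k} = ENNReal.ofReal (c * (k : ℝ) ^ (-(3 : ℝ) / 2)))
    (hzero : ∀ i, P {ω | Z i ω = 0} = 0)
    (A : ℕ → Set Ω)
    (hA : ∀ n, A n = {ω | ∃ i < n, ∃ j < n, i ≠ j ∧ Z i ω = Z j ω ∧
      ∀ m < n, Z m ω ≤ Z i ω}) :
    Tendsto (fun n : ℕ => (n : ℝ) * (P (A n)).toReal) atTop (nhds 0) := by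
  have hc : 0 < c := HasThreeHalvesPowerLaw.const_pos (hlaw 0) (hzero 0)
  refine squeeze_zero' (Eventually.of_forall fun n => by positivity) ?_
    (tendsto_mul_exp_neg_rpow_add_rpow (c * 4⁻¹) (c ^ 2) (by positivity))
  filter_upwards [eventually_ge_atTop 1] with n hn
  have hn0 : (0 : ℝ) < n := by exact_mod_cast hn
  obtain ⟨K, hKlow, hKup⟩ := exists_nat_between_self_two_mul
    (Real.one_le_rpow (Nat.one_le_cast.2 hn) (by norm_num : (0 : ℝ) ≤ 7 / 4))
  have hK0 : (0 : ℝ) < K := (Real.rpow_pos_of_pos hn0 _).trans_le hKlow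
  have hevent := measureReal_maxAttainedTwice_le hZm hindep hlaw hc.le
    (by exact_mod_cast hK0 : 1 ≤ K) n
  rw [hA n]
  calc (n : ℝ) * P.real (maxAttainedTwice Z n)
      ≤ n * (Real.exp (-(n * (c * 2 ^ (-(3 : ℝ) / 2) * (K : ℝ) ^ (-(1 : ℝ) / 2))))
          + n ^ 2 * (c ^ 2 / (K : ℝ) ^ 2)) := mul_le_mul_of_nonneg_left hevent hn0.le
    _ = n * Real.exp (-(c * (n * (2 ^ (-(3 : ℝ) / 2) * (K : ℝ) ^ (-(1 : ℝ) / 2)))))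
          + c ^ 2 * ((n : ℝ) ^ 3 / (K : ℝ) ^ 2) := by ring_nf
    _ ≤ n * Real.exp (-(c * 4⁻¹ * (n : ℝ) ^ (8⁻¹ : ℝ))) + c ^ 2 * (n : ℝ) ^ (-(2⁻¹ : ℝ)) := by
        rw [mul_assoc c]
        gcongr _ * Real.exp (-(c * ?_)) + c ^ 2 * ?_
        · exact rpow_eighth_le_of_le_two_mul hn0 hK0 hKup
        · exact cube_div_sq_le_rpow hn0 hKlow

theorem stmt_18 {Ω : Type*} [MeasurableSpace Ω] (P : Measure Ω) [IsProbabilityMeasure P]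
    (Z : ℕ → Ω → ℕ) (hZm : ∀ i, Measurable (Z i))
    (hindep : iIndepFun Z P)
    (hid : ∀ i j, IdentDistrib (Z i) (Z j) P P)
    (c : ℝ)
    (hlaw : ∀ i, ∀ k : ℕ, 1 ≤ k →
      P {ω | Z i ω = k} = ENNReal.ofReal (c * (k : ℝ) ^ (-(3 : ℝ) / 2)))
    (hzero : ∀ i, P {ω | Z i ω = 0} = 0)
    (A : ℕ → Set Ω)
    (hA : ∀ n, A n = {ω | ∃ i < n, ∃ j < n, i ≠ j ∧ Z i ω = Z j ω ∧
      ∀ m < n, Z m ω ≤ Z i ω}) :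
    Tendsto (fun n : ℕ => (n : ℝ) * (P (A n)).toReal) atTop (nhds 0) :=
  stmt_18_general P Z hZm hindep c hlaw hzero A hA
end
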